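/- arXiv:1911.05951 — 8 statements merged into one kernel-verified Lean document; each statement's English description precedes it below -/
import Mathlib

section
/- Let L be an n×n real Z-matrix (off-diagonal entries nonpositive) with L·1 = 0, Lᵀ·1 = 0, and rank(L) = n−1. Partition L as L = [[B, −Be],[−eᵀB, eᵀBe]] where B is the leading (n−1)×(n−1) principal submatrix and e is the all-ones vector in ℝ^{n−1}. Then B is invertible and the Moore–Penrose inverse of L is given by L† = [[B⁻¹ − (1/n)eeᵀB⁻¹ − (1/n)B⁻¹eeᵀ, −(1/n)B⁻¹e],[−(1/n)eᵀB⁻¹, 0]] + (eᵀB⁻¹e/n²)·11ᵀ, where 1 is the all-ones vector in ℝ^n. -/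
open Matrix Finset

/-- Out-degree of vertex `i` in the digraph with adjacency `A`. -/
def outdeg {n : ℕ} (A : Fin n → Fin n → Bool) (i : Fin n) : ℕ :=
  (Finset.univ.filter (fun j => A i j = true)).card

/-- In-degree of vertex `i`. -/
def indeg {n : ℕ} (A : Fin n → Fin n → Bool) (i : Fin n) : ℕ :=
  (Finset.univ.filter (fun j => A j i = true)).card

/-- Laplacian matrix of a digraph: diagonal = out-degree, `-1` on edges, `0` otherwise. -/
def lap {n : ℕ} (A : Fin n → Fin n → Bool) : Matrix (Fin n) (Fin n) ℝ :=
  Matrix.of fun i j => if i = j then (outdeg A i : ℝ) else if A i j then -1 else 0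

/-- Reachability by directed edges. -/
def Reach {n : ℕ} (A : Fin n → Fin n → Bool) : Fin n → Fin n → Prop :=
  Relation.ReflTransGen (fun a b => A a b = true)

def StronglyConnected {n : ℕ} (A : Fin n → Fin n → Bool) : Prop := ∀ i j, Reach A i j

def IsBalanced {n : ℕ} (A : Fin n → Fin n → Bool) : Prop := ∀ i, indeg A i = outdeg A i

/-- In-degree of `v` in an edge set `T`. -/
def tIndeg {n : ℕ} (T : Finset (Fin n × Fin n)) (v : Fin n) : ℕ :=
  (T.filter (fun e => e.2 = v)).card

/-- Reachability using only the edges of `T`. -/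
def ReachIn {n : ℕ} (T : Finset (Fin n × Fin n)) : Fin n → Fin n → Prop :=
  Relation.ReflTransGen (fun a b => (a, b) ∈ T)

/-- Spanning tree of the digraph rooted at `i` (spanning arborescence, edges directed
away from `i`): every vertex other than `i` has in-degree 1, `i` has in-degree 0, and
every vertex is reachable from `i` (i.e. the subgraph is connected and acyclic). -/
def IsSpanningTree {n : ℕ} (A : Fin n → Fin n → Bool) (i : Fin n)
    (T : Finset (Fin n × Fin n)) : Prop :=
  (∀ e ∈ T, A e.1 e.2 = true) ∧ tIndeg T i = 0 ∧
    (∀ v, v ≠ i → tIndeg T v = 1) ∧ (∀ v, ReachIn T i v)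

/-- Spanning forest with exactly two trees, rooted at `i` and `j`: two vertex-disjoint
arborescences partitioning the vertex set, with roots `i` and `j`. -/
def IsTwoForest {n : ℕ} (A : Fin n → Fin n → Bool) (i j : Fin n)
    (T : Finset (Fin n × Fin n)) : Prop :=
  (∀ e ∈ T, A e.1 e.2 = true) ∧ tIndeg T i = 0 ∧ tIndeg T j = 0 ∧
    (∀ v, v ≠ i → v ≠ j → tIndeg T v = 1) ∧ (∀ v, ReachIn T i v ∨ ReachIn T j v)

/-- `det L[{i}ᶜ, {i}ᶜ]`: determinant of the principal submatrix deleting row/column `i`. -/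
def minor1 {n : ℕ} (L : Matrix (Fin n) (Fin n) ℝ) (i : Fin n) : ℝ :=
  (L.submatrix (fun a : {x : Fin n // x ≠ i} => (a : Fin n))
    (fun a : {x : Fin n // x ≠ i} => (a : Fin n))).det

/-- `det L[{i,j}ᶜ, {i,j}ᶜ]`: determinant of the principal submatrix deleting rows and
columns `i` and `j`. -/
def minor2 {n : ℕ} (L : Matrix (Fin n) (Fin n) ℝ) (i j : Fin n) : ℝ :=
  (L.submatrix (fun a : {x : Fin n // x ≠ i ∧ x ≠ j} => (a : Fin n))
    (fun a : {x : Fin n // x ≠ i ∧ x ≠ j} => (a : Fin n))).det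

/-- `M` is the Moore–Penrose inverse of `L` (the four Penrose equations). -/
def IsMoorePenrose {n : ℕ} (L M : Matrix (Fin n) (Fin n) ℝ) : Prop :=
  L * M * L = L ∧ M * L * M = M ∧ (L * M)ᵀ = L * M ∧ (M * L)ᵀ = M * L

/-- Resistance `r_{ij} = l†_{ii} + l†_{jj} - 2 l†_{ij}` computed from `M = L†`. -/
def resist {n : ℕ} (M : Matrix (Fin n) (Fin n) ℝ) (i j : Fin n) : ℝ :=
  M i i + M j j - 2 * M i j

/-- Directed path from `i` to `j`: a list of distinct vertices starting at `i`, ending at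
`j`, consecutive ones joined by directed edges. -/
def IsPath {n : ℕ} (A : Fin n → Fin n → Bool) (i j : Fin n) (p : List (Fin n)) : Prop :=
  p.Chain' (fun a b => A a b = true) ∧ p.head? = some i ∧ p.getLast? = some j ∧ p.Nodup

/-- `s` is the edge set of a directed cycle of the digraph: the cyclically consecutive
pairs of a nonempty duplicate-free vertex list, all being directed edges. -/
def IsCycle {n : ℕ} (A : Fin n → Fin n → Bool) (s : Finset (Fin n × Fin n)) : Prop :=
  ∃ c : List (Fin n), 2 ≤ c.length ∧ c.Nodup ∧
    (∀ p ∈ c.zip (c.rotate 1), A p.1 p.2 = true) ∧ s = (c.zip (c.rotate 1)).toFinset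

/-- Vertex set of a cycle given by its edge set. -/
def cycVerts {n : ℕ} (s : Finset (Fin n × Fin n)) : Finset (Fin n) := s.image Prod.fst

/-- Directed cactus: strongly connected and every directed edge lies in exactly one
directed cycle. -/
def IsCactus {n : ℕ} (A : Fin n → Fin n → Bool) : Prop :=
  StronglyConnected A ∧
    ∀ i j : Fin n, A i j = true → ∃! s : Finset (Fin n × Fin n), IsCycle A s ∧ (i, j) ∈ s

/-- Classical distance: length (number of edges) of a shortest directed path. -/
noncomputable def pdist {n : ℕ} (A : Fin n → Fin n → Bool) (i j : Fin n) : ℕ :=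
  sInf {m : ℕ | ∃ p : List (Fin n), IsPath A i j p ∧ p.length = m + 1}

/-!
Let `B` be the leading principal submatrix of `L`, and let `E` and `K` be the matrices of
`v ↦ (v, 0)` and `v ↦ (v, -∑ v)`. Zero column sums give `L E = K B` and zero row sums
`Eᵀ L = B Kᵀ`, hence `L = K B Kᵀ`; so `n = rank L ≤ rank B` and `B` is invertible.
With `C = B⁻¹` and the centering projection `P = I - J / (n + 1)` (which fixes `L` on both
sides and satisfies `K Eᵀ P = P`), one gets `L (P E C Eᵀ P) = P = (P E C Eᵀ P) L`, so
`P E C Eᵀ P` satisfies the four Penrose equations. Expanding it entrywise gives the formula.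
-/

namespace Matrix

section Extension

variable (R : Type*) [CommRing R] (n : ℕ)

def extendZero : Matrix (Fin (n + 1)) (Fin n) R :=
  of (Fin.snoc (of.symm (1 : Matrix (Fin n) (Fin n) R)) 0)

def extendNegSum : Matrix (Fin (n + 1)) (Fin n) R :=
  of (Fin.snoc (of.symm (1 : Matrix (Fin n) (Fin n) R)) (-1))

variable {R n} {m : Type*}

@[simp] lemma extendZero_apply_castSucc (i j : Fin n) :
    extendZero R n i.castSucc j = (1 : Matrix (Fin n) (Fin n) R) i j := by
  simp [extendZero]

@[simp] lemma extendZero_apply_last (j : Fin n) : extendZero R n (Fin.last n) j = 0 := by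
  simp [extendZero]

@[simp] lemma extendNegSum_apply_castSucc (i j : Fin n) :
    extendNegSum R n i.castSucc j = (1 : Matrix (Fin n) (Fin n) R) i j := by
  simp [extendNegSum]

@[simp] lemma extendNegSum_apply_last (j : Fin n) : extendNegSum R n (Fin.last n) j = -1 := by
  simp [extendNegSum]

@[simp] lemma extendZero_mul_apply_castSucc (A : Matrix (Fin n) m R) (i : Fin n) (j : m) :
    (extendZero R n * A) i.castSucc j = A i j := by
  simp [mul_apply, one_apply]

@[simp] lemma extendZero_mul_apply_last (A : Matrix (Fin n) m R) (j : m) :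
    (extendZero R n * A) (Fin.last n) j = 0 := by
  simp [mul_apply]

@[simp] lemma mul_extendZero_transpose_apply_castSucc (A : Matrix m (Fin n) R) (i : m)
    (j : Fin n) : (A * (extendZero R n)ᵀ) i j.castSucc = A i j := by
  simp [mul_apply, one_apply]

@[simp] lemma mul_extendZero_transpose_apply_last (A : Matrix m (Fin n) R) (i : m) :
    (A * (extendZero R n)ᵀ) i (Fin.last n) = 0 := by
  simp [mul_apply]

lemma extendZero_transpose_mul_mul_extendZero (A : Matrix (Fin (n + 1)) (Fin (n + 1)) R) :
    (extendZero R n)ᵀ * A * extendZero R n = A.submatrix Fin.castSucc Fin.castSucc := by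
  ext i j
  simp [mul_apply, one_apply, Fin.sum_univ_castSucc]

lemma extendNegSum_mul_extendZero_transpose_mul {A : Matrix (Fin (n + 1)) m R}
    (hA : 1 ᵥ* A = 0) : extendNegSum R n * ((extendZero R n)ᵀ * A) = A := by
  ext i j
  have hcol : ∑ k : Fin n, A k.castSucc j + A (Fin.last n) j = 0 := by
    simpa [vecMul, dotProduct, Fin.sum_univ_castSucc] using congrFun hA j
  induction i using Fin.lastCases <;>
    simp [mul_apply, one_apply, Fin.sum_univ_castSucc, eq_neg_of_add_eq_zero_right hcol]

end Extension

section ZeroLineSums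

variable {R : Type*} [CommRing R] {n : ℕ} {L : Matrix (Fin (n + 1)) (Fin (n + 1)) R}

lemma mul_extendZero_of_vecMul_eq_zero (hcol : 1 ᵥ* L = 0) :
    L * extendZero R n = extendNegSum R n * L.submatrix Fin.castSucc Fin.castSucc := by
  rw [← extendZero_transpose_mul_mul_extendZero, Matrix.mul_assoc,
    extendNegSum_mul_extendZero_transpose_mul (by rw [← vecMul_vecMul, hcol, zero_vecMul])]

lemma extendZero_transpose_mul_of_mulVec_eq_zero (hrow : L *ᵥ 1 = 0) :
    (extendZero R n)ᵀ * L = L.submatrix Fin.castSucc Fin.castSucc * (extendNegSum R n)ᵀ := by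
  simpa using congrArg transpose (mul_extendZero_of_vecMul_eq_zero (L := Lᵀ)
    (by rwa [vecMul_transpose]))

lemma eq_extendNegSum_mul_submatrix_mul_transpose (hrow : L *ᵥ 1 = 0) (hcol : 1 ᵥ* L = 0) :
    L = extendNegSum R n * L.submatrix Fin.castSucc Fin.castSucc * (extendNegSum R n)ᵀ := by
  rw [Matrix.mul_assoc, ← extendZero_transpose_mul_of_mulVec_eq_zero hrow,
    extendNegSum_mul_extendZero_transpose_mul hcol]

end ZeroLineSums

section Rank

variable {𝕜 : Type*} [Field 𝕜]

lemma isUnit_of_card_le_rank {m : Type*} [Fintype m] [DecidableEq m] {A : Matrix m m 𝕜}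
    (h : Fintype.card m ≤ A.rank) : IsUnit A := by
  have hrange : LinearMap.range A.mulVecLin = ⊤ :=
    Submodule.eq_top_of_finrank_eq (le_antisymm (Submodule.finrank_le _)
      (by rw [Module.finrank_fintype_fun_eq_card]; exact h))
  exact mulVec_surjective_iff_isUnit.mp (LinearMap.range_eq_top.mp hrange)

lemma isUnit_submatrix_castSucc_of_rank_eq {n : ℕ} {L : Matrix (Fin (n + 1)) (Fin (n + 1)) 𝕜}
    (hrow : L *ᵥ 1 = 0) (hcol : 1 ᵥ* L = 0) (hrank : L.rank = n) :
    IsUnit (L.submatrix Fin.castSucc Fin.castSucc) := by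
  set B := L.submatrix Fin.castSucc Fin.castSucc
  refine isUnit_of_card_le_rank ?_
  calc Fintype.card (Fin n) = (extendNegSum 𝕜 n * B * (extendNegSum 𝕜 n)ᵀ).rank := by
        rw [← eq_extendNegSum_mul_submatrix_mul_transpose hrow hcol, hrank, Fintype.card_fin]
    _ ≤ (extendNegSum 𝕜 n * B).rank := rank_mul_le_left _ _
    _ ≤ B.rank := rank_mul_le_right _ _

end Rank

section Centering

variable (𝕜 : Type*) [Field 𝕜] (ι : Type*) [Fintype ι] [DecidableEq ι]

def centering : Matrix ι ι 𝕜 := 1 - (Fintype.card ι : 𝕜)⁻¹ • vecMulVec 1 1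

variable {𝕜 ι} {m : Type*}

lemma transpose_centering : (centering 𝕜 ι)ᵀ = centering 𝕜 ι := by
  rw [centering, transpose_sub, transpose_one, transpose_smul, transpose_vecMulVec]

lemma vecMul_centering [CharZero 𝕜] [Nonempty ι] : 1 ᵥ* centering 𝕜 ι = 0 := by
  rw [centering, vecMul_sub, vecMul_one, vecMul_smul, vecMul_vecMulVec, smul_smul]
  ext
  simp [dotProduct]

lemma mul_centering_of_mulVec_eq_zero {A : Matrix m ι 𝕜} (h : A *ᵥ 1 = 0) :
    A * centering 𝕜 ι = A := by
  rw [centering, Matrix.mul_sub, Matrix.mul_one, Matrix.mul_smul, mul_vecMulVec, h,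
    zero_vecMulVec, smul_zero, sub_zero]

lemma centering_mul_of_vecMul_eq_zero {A : Matrix ι m 𝕜} (h : 1 ᵥ* A = 0) :
    centering 𝕜 ι * A = A := by
  rw [centering, Matrix.sub_mul, Matrix.one_mul, Matrix.smul_mul, vecMulVec_mul, h]
  ext
  simp

lemma centering_mul_centering [CharZero 𝕜] [Nonempty ι] :
    centering 𝕜 ι * centering 𝕜 ι = centering 𝕜 ι :=
  centering_mul_of_vecMul_eq_zero vecMul_centering

lemma centering_mul_mul_centering_apply (X : Matrix ι ι 𝕜) (i j : ι) :
    (centering 𝕜 ι * X * centering 𝕜 ι) i j = X i j - (Fintype.card ι : 𝕜)⁻¹ * (1 ᵥ* X) j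
      - (Fintype.card ι : 𝕜)⁻¹ * (X *ᵥ 1) i + (Fintype.card ι : 𝕜)⁻¹ ^ 2 * ∑ k, ∑ l, X k l := by
  simp only [centering, Matrix.sub_mul, Matrix.mul_sub, Matrix.one_mul, Matrix.mul_one,
    Matrix.smul_mul, Matrix.mul_smul, vecMulVec_mul, mul_vecMulVec, sub_apply, smul_apply,
    vecMulVec_apply]
  simp only [mulVec, vecMul, dotProduct, sub_apply, smul_apply, vecMulVec_apply, Pi.one_apply,
    one_mul, mul_one, smul_eq_mul, Finset.sum_sub_distrib, ← Finset.mul_sum]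
  rw [Finset.sum_comm (γ := ι) (f := fun k l => X l k)]
  ring

end Centering

section PseudoInverse

variable {𝕜 : Type*} [Field 𝕜] [CharZero 𝕜] {n : ℕ} {L : Matrix (Fin (n + 1)) (Fin (n + 1)) 𝕜}
  {C : Matrix (Fin n) (Fin n) 𝕜}

lemma mul_centering_mul_extendZero_mul_centering (hrow : L *ᵥ 1 = 0) (hcol : 1 ᵥ* L = 0)
    (hBC : L.submatrix Fin.castSucc Fin.castSucc * C = 1) :
    L * (centering 𝕜 (Fin (n + 1)) * (extendZero 𝕜 n * C * (extendZero 𝕜 n)ᵀ) *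
      centering 𝕜 (Fin (n + 1))) = centering 𝕜 (Fin (n + 1)) := by
  calc _ = L * centering 𝕜 (Fin (n + 1)) * extendZero 𝕜 n * C *
        ((extendZero 𝕜 n)ᵀ * centering 𝕜 (Fin (n + 1))) := by simp only [Matrix.mul_assoc]
    _ = extendNegSum 𝕜 n * (L.submatrix Fin.castSucc Fin.castSucc * C) *
        ((extendZero 𝕜 n)ᵀ * centering 𝕜 (Fin (n + 1))) := by
      rw [mul_centering_of_mulVec_eq_zero hrow, mul_extendZero_of_vecMul_eq_zero hcol,
        Matrix.mul_assoc (extendNegSum 𝕜 n)]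
    _ = _ := by rw [hBC, Matrix.mul_one, extendNegSum_mul_extendZero_transpose_mul vecMul_centering]

lemma centering_mul_extendZero_mul_centering_mul (hrow : L *ᵥ 1 = 0) (hcol : 1 ᵥ* L = 0)
    (hCB : C * L.submatrix Fin.castSucc Fin.castSucc = 1) :
    centering 𝕜 (Fin (n + 1)) * (extendZero 𝕜 n * C * (extendZero 𝕜 n)ᵀ) *
      centering 𝕜 (Fin (n + 1)) * L = centering 𝕜 (Fin (n + 1)) := by
  calc _ = centering 𝕜 (Fin (n + 1)) * extendZero 𝕜 n * C *
        ((extendZero 𝕜 n)ᵀ * (centering 𝕜 (Fin (n + 1)) * L)) := by simp only [Matrix.mul_assoc]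
    _ = centering 𝕜 (Fin (n + 1)) * extendZero 𝕜 n *
        (C * L.submatrix Fin.castSucc Fin.castSucc) * (extendNegSum 𝕜 n)ᵀ := by
      rw [centering_mul_of_vecMul_eq_zero hcol, extendZero_transpose_mul_of_mulVec_eq_zero hrow]
      simp only [Matrix.mul_assoc]
    _ = (extendNegSum 𝕜 n * ((extendZero 𝕜 n)ᵀ * centering 𝕜 (Fin (n + 1))))ᵀ := by
      rw [hCB, Matrix.mul_one, transpose_mul, transpose_mul, transpose_transpose,
        transpose_centering, Matrix.mul_assoc]
    _ = _ := by
      rw [extendNegSum_mul_extendZero_transpose_mul vecMul_centering, transpose_centering]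

end PseudoInverse

end Matrix

lemma IsMoorePenrose.unique {n : ℕ} {L M N : Matrix (Fin n) (Fin n) ℝ}
    (hM : IsMoorePenrose L M) (hN : IsMoorePenrose L N) : M = N := by
  obtain ⟨hM1, hM2, hM3, hM4⟩ := hM
  obtain ⟨hN1, hN2, hN3, hN4⟩ := hN
  have hLM : L * M = L * N :=
    calc L * M = (L * N * L * M)ᵀ := by rw [hN1, hM3]
      _ = (L * M)ᵀ * (L * N)ᵀ := by rw [Matrix.mul_assoc (L * N), transpose_mul]
      _ = L * M * L * N := by rw [hM3, hN3, ← Matrix.mul_assoc]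
      _ = L * N := by rw [hM1]
  have hML : M * L = N * L :=
    calc M * L = (M * (L * N * L))ᵀ := by rw [hN1, hM4]
      _ = (N * L)ᵀ * (M * L)ᵀ := by rw [Matrix.mul_assoc L, ← Matrix.mul_assoc, transpose_mul]
      _ = N * (L * M * L) := by rw [hN4, hM4]; simp only [Matrix.mul_assoc]
      _ = N * L := by rw [hM1]
  calc M = N * L * M := by rw [← hML, hM2]
    _ = N := by rw [Matrix.mul_assoc, hLM, ← Matrix.mul_assoc, hN2]

lemma isMoorePenrose_of_mul_eq {n : ℕ} {L M P : Matrix (Fin n) (Fin n) ℝ} (hLM : L * M = P)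
    (hML : M * L = P) (hP : Pᵀ = P) (hPL : P * L = L) (hMP : M * P = M) : IsMoorePenrose L M :=
  ⟨by rw [hLM, hPL], by rw [Matrix.mul_assoc, hLM, hMP], by rw [hLM, hP], by rw [hML, hP]⟩

lemma isMoorePenrose_centering_mul_extendZero_mul_centering {n : ℕ}
    {L : Matrix (Fin (n + 1)) (Fin (n + 1)) ℝ} {C : Matrix (Fin n) (Fin n) ℝ}
    (hrow : L *ᵥ 1 = 0) (hcol : 1 ᵥ* L = 0)
    (hBC : L.submatrix Fin.castSucc Fin.castSucc * C = 1)
    (hCB : C * L.submatrix Fin.castSucc Fin.castSucc = 1) :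
    IsMoorePenrose L (centering ℝ (Fin (n + 1)) * (extendZero ℝ n * C * (extendZero ℝ n)ᵀ) *
      centering ℝ (Fin (n + 1))) :=
  isMoorePenrose_of_mul_eq (mul_centering_mul_extendZero_mul_centering hrow hcol hBC)
    (centering_mul_extendZero_mul_centering_mul hrow hcol hCB) transpose_centering
    (centering_mul_of_vecMul_eq_zero hcol)
    (by rw [Matrix.mul_assoc _ (centering ℝ _), centering_mul_centering])

theorem stmt_1_general {n : ℕ} (L : Matrix (Fin (n+1)) (Fin (n+1)) ℝ)
    (hrow : ∀ i, ∑ j, L i j = 0)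
    (hcol : ∀ j, ∑ i, L i j = 0)
    (hrank : L.rank = n) :
    IsUnit (L.submatrix Fin.castSucc Fin.castSucc) ∧
    ∀ M : Matrix (Fin (n+1)) (Fin (n+1)) ℝ, IsMoorePenrose L M →
    ∀ C : Matrix (Fin n) (Fin n) ℝ, C = (L.submatrix Fin.castSucc Fin.castSucc)⁻¹ →
      M = Matrix.of (fun i j : Fin (n+1) =>
        (if hi : i = Fin.last n then
          (if hj : j = Fin.last n then 0
            else -(1 / ((n : ℝ) + 1)) * ∑ k, C k (j.castPred hj))
          else if hj : j = Fin.last n then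
            -(1 / ((n : ℝ) + 1)) * ∑ k, C (i.castPred hi) k
          else C (i.castPred hi) (j.castPred hj)
            - (1 / ((n : ℝ) + 1)) * ∑ k, C k (j.castPred hj)
            - (1 / ((n : ℝ) + 1)) * ∑ k, C (i.castPred hi) k)
        + (∑ k, ∑ l, C k l) / ((n : ℝ) + 1) ^ 2) := by
  have hrow' : L *ᵥ 1 = 0 := funext fun i => by simpa [mulVec, dotProduct] using hrow i
  have hcol' : 1 ᵥ* L = 0 := funext fun j => by simpa [vecMul, dotProduct] using hcol j
  have hB := isUnit_submatrix_castSucc_of_rank_eq hrow' hcol' hrank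
  refine ⟨hB, fun M hM C hC => ?_⟩
  have hdet := (isUnit_iff_isUnit_det _).mp hB
  rw [hM.unique (isMoorePenrose_centering_mul_extendZero_mul_centering hrow' hcol'
    (hC ▸ mul_nonsing_inv _ hdet) (hC ▸ nonsing_inv_mul _ hdet))]
  ext i j
  rw [centering_mul_mul_centering_apply]
  induction i using Fin.lastCases <;> induction j using Fin.lastCases <;>
    simp only [of_apply, Fin.castSucc_ne_last, ↓reduceDIte, Fin.castPred_castSucc,
      Fintype.card_fin, Nat.cast_add, Nat.cast_one, vecMul, mulVec, dotProduct, Pi.one_apply,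
      one_mul, mul_one, mul_zero, add_zero, sum_const_zero, Fin.sum_univ_castSucc,
      extendZero_mul_apply_castSucc, extendZero_mul_apply_last,
      mul_extendZero_transpose_apply_castSucc, mul_extendZero_transpose_apply_last, one_div,
      inv_pow] <;>
    ring

/-- explicit Moore–Penrose inverse of a rank `n-1` Z-matrix with zero row
and column sums, in terms of the inverse of its leading principal submatrix `B`. -/
theorem stmt_1 {n : ℕ} (L : Matrix (Fin (n+1)) (Fin (n+1)) ℝ)
    (hZ : ∀ i j, i ≠ j → L i j ≤ 0)
    (hrow : ∀ i, ∑ j, L i j = 0)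
    (hcol : ∀ j, ∑ i, L i j = 0)
    (hrank : L.rank = n) :
    IsUnit (L.submatrix Fin.castSucc Fin.castSucc) ∧
    ∀ M : Matrix (Fin (n+1)) (Fin (n+1)) ℝ, IsMoorePenrose L M →
    ∀ C : Matrix (Fin n) (Fin n) ℝ, C = (L.submatrix Fin.castSucc Fin.castSucc)⁻¹ →
      M = Matrix.of (fun i j : Fin (n+1) =>
        (if hi : i = Fin.last n then
          (if hj : j = Fin.last n then 0
            else -(1 / ((n : ℝ) + 1)) * ∑ k, C k (j.castPred hj))
          else if hj : j = Fin.last n then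
            -(1 / ((n : ℝ) + 1)) * ∑ k, C (i.castPred hi) k
          else C (i.castPred hi) (j.castPred hj)
            - (1 / ((n : ℝ) + 1)) * ∑ k, C k (j.castPred hj)
            - (1 / ((n : ℝ) + 1)) * ∑ k, C (i.castPred hi) k)
        + (∑ k, ∑ l, C k l) / ((n : ℝ) + 1) ^ 2) :=
  stmt_1_general L hrow hcol hrank
end

section
/- Let L be a real n×n matrix with rank n−1 and with all row sums and all column sums equal to zero. Then all cofactors of L are equal; in particular, det(L[{i}ᶜ,{i}ᶜ]) is the same for every i. -/
open Matrix Finset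

lemma ker_const {n : ℕ} (hn : 0 < n) (L : Matrix (Fin n) (Fin n) ℝ)
    (hrank : L.rank = n - 1) (hone : L *ᵥ (fun _ => (1:ℝ)) = 0)
    (v : Fin n → ℝ) (hv : L *ᵥ v = 0) (i k : Fin n) : v i = v k := by
  set u : Fin n → ℝ := fun _ => 1 with hu
  have hu0 : u ≠ 0 := by
    intro h
    have := congrFun h ⟨0, hn⟩
    simp [hu] at this
  have hker : Submodule.span ℝ {u} ≤ LinearMap.ker L.mulVecLin := by
    rw [Submodule.span_singleton_le_iff_mem, LinearMap.mem_ker, mulVecLin_apply]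
    exact hone
  have hrn := LinearMap.finrank_range_add_finrank_ker L.mulVecLin
  have hfk : Module.finrank ℝ (LinearMap.ker L.mulVecLin) = 1 := by
    have : Module.finrank ℝ (Fin n → ℝ) = n := by simp
    rw [this] at hrn
    have hr : Module.finrank ℝ (LinearMap.range L.mulVecLin) = n - 1 := hrank
    omega
  have hspan : Submodule.span ℝ {u} = LinearMap.ker L.mulVecLin := by
    apply Submodule.eq_of_le_of_finrank_le hker
    rw [hfk, finrank_span_singleton hu0]
  have hvmem : v ∈ Submodule.span ℝ {u} := by
    rw [hspan, LinearMap.mem_ker, mulVecLin_apply]; exact hv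
  obtain ⟨c, hc⟩ := Submodule.mem_span_singleton.mp hvmem
  have hi := congrFun hc i
  have hk := congrFun hc k
  simp [hu] at hi hk
  rw [← hi, ← hk]

lemma minor1_eq_det_update {n : ℕ} (L : Matrix (Fin n) (Fin n) ℝ) (i : Fin n) :
    (L.updateRow i (Pi.single i 1)).det = minor1 L i := by
  haveI : Unique {x : Fin n // ¬ x ≠ i} := ⟨⟨⟨i, by simp⟩⟩, by
    rintro ⟨x, hx⟩; simp only [ne_eq, not_not] at hx; subst hx; rfl⟩
  set e := Equiv.sumCompl (fun x : Fin n => x ≠ i) with he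
  rw [← det_submatrix_equiv_self e]
  have : (L.updateRow i (Pi.single i 1)).submatrix e e =
      fromBlocks (L.submatrix (fun a : {x : Fin n // x ≠ i} => (a : Fin n))
        (fun a : {x : Fin n // x ≠ i} => (a : Fin n)))
        (of fun a : {x : Fin n // x ≠ i} => fun _ : {x : Fin n // ¬ x ≠ i} => L a i)
        0 1 := by
    ext a b
    cases a with
    | inl a =>
      cases b with
      | inl b => simp [he, Equiv.sumCompl, updateRow_apply, a.2]
      | inr b =>
        have hb : (b : Fin n) = i := not_not.mp b.2
        simp [he, Equiv.sumCompl, updateRow_apply, a.2, hb]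
    | inr a =>
      have ha : (a : Fin n) = i := not_not.mp a.2
      cases b with
      | inl b =>
        simp [he, Equiv.sumCompl, updateRow_apply, ha, Pi.single_apply,
          (Ne.symm b.2 : i ≠ (b:Fin n))]
      | inr b =>
        have hb : (b : Fin n) = i := not_not.mp b.2
        have hab : a = b := Subtype.ext (ha.trans hb.symm)
        simp [he, Equiv.sumCompl, updateRow_apply, ha, hb, hab, Pi.single_apply,
          Matrix.one_apply]
  rw [this, det_fromBlocks_zero₂₁, det_one, mul_one, minor1]

/-- a rank `n-1` matrix with zero row and column sums has all cofactors
equal; in particular all principal minors of size `n-1` coincide. -/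
theorem stmt_2 {n : ℕ} (L : Matrix (Fin n) (Fin n) ℝ)
    (hrank : L.rank = n - 1)
    (hrow : ∀ i, ∑ j, L i j = 0)
    (hcol : ∀ j, ∑ i, L i j = 0) :
    (∀ i j k l : Fin n, L.adjugate i j = L.adjugate k l) ∧
    (∀ i j : Fin n, minor1 L i = minor1 L j) := by
  rcases Nat.eq_zero_or_pos n with hn | hn
  · subst hn
    exact ⟨fun i => i.elim0, fun i => i.elim0⟩
  have hdet : L.det = 0 := by
    by_contra hd
    have : IsUnit L := (Matrix.isUnit_iff_isUnit_det L).mpr (IsUnit.mk0 _ hd)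
    have := Matrix.rank_of_isUnit L this
    rw [hrank] at this
    simp [Fintype.card_fin] at this
    omega
  have hone : L *ᵥ (fun _ => (1:ℝ)) = 0 := by
    ext i; simp [mulVec, dotProduct, hrow i]
  have honeT : Lᵀ *ᵥ (fun _ => (1:ℝ)) = 0 := by
    ext j; simp [mulVec, dotProduct, hcol j]
  have hrankT : Lᵀ.rank = n - 1 := by rw [Matrix.rank_transpose]; exact hrank
  have hLadj : L * L.adjugate = 0 := by rw [mul_adjugate, hdet]; simp
  have hadjL : L.adjugate * L = 0 := by rw [adjugate_mul, hdet]; simp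
  -- columns of adjugate are constant
  have hcolconst : ∀ j i k : Fin n, L.adjugate i j = L.adjugate k j := by
    intro j i k
    apply ker_const hn L hrank hone (fun a => L.adjugate a j)
    ext a
    have := congrFun (congrFun hLadj a) j
    simpa [mulVec, dotProduct, Matrix.mul_apply] using this
  have hrowconst : ∀ i j l : Fin n, L.adjugate i j = L.adjugate i l := by
    intro i j l
    apply ker_const hn Lᵀ hrankT honeT (fun a => L.adjugate i a)
    ext a
    have := congrFun (congrFun hadjL i) a
    simpa [mulVec, dotProduct, Matrix.mul_apply, Matrix.transpose_apply, mul_comm]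
      using this
  have hmain : ∀ i j k l : Fin n, L.adjugate i j = L.adjugate k l := by
    intro i j k l
    rw [hcolconst j i k, hrowconst k j l]
  refine ⟨hmain, fun i j => ?_⟩
  rw [← minor1_eq_det_update, ← minor1_eq_det_update, ← adjugate_apply, ← adjugate_apply]
  exact hmain i i j j
end

section
/- Let G be a strongly connected balanced digraph on vertex set {1,…,n} with Laplacian L. For any vertex i, the number of spanning trees of G rooted at i (spanning arborescences with all edges directed away from i) equals det(L[{i}ᶜ,{i}ᶜ]), the principal minor of L obtained by deleting row and column i. -/
open Matrix Finset

section MTTaux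

variable {n : ℕ}

/-- Extend a parent-assignment `r` on vertices `≠ i` to all of `Fin n`, fixing `i`. -/
def Fext (i : Fin n) (r : {x : Fin n // x ≠ i} → Fin n) : Fin n → Fin n :=
  fun x => if h : x = i then i else r ⟨x, h⟩

/-- Every vertex reaches `i` by iterating `r`. -/
def Acyc (i : Fin n) (r : {x : Fin n // x ≠ i} → Fin n) : Prop :=
  ∀ x, ∃ k, (Fext i r)^[k] x = i

lemma Fext_coe {i : Fin n} (r : {x : Fin n // x ≠ i} → Fin n)
    (v : {x : Fin n // x ≠ i}) : Fext i r ↑v = r v := by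
  simp [Fext, v.2]

lemma dist_succ {i : Fin n} {r : {x : Fin n // x ≠ i} → Fin n} (hac : Acyc i r)
    {x : Fin n} (hx : x ≠ i) :
    Nat.find (hac (Fext i r x)) + 1 = Nat.find (hac x) := by
  have h1 : (Fext i r)^[Nat.find (hac (Fext i r x)) + 1] x = i := by
    rw [Function.iterate_succ_apply]; exact Nat.find_spec (hac (Fext i r x))
  have hle : Nat.find (hac x) ≤ Nat.find (hac (Fext i r x)) + 1 := Nat.find_le h1
  have hpos : 0 < Nat.find (hac x) := by
    rcases Nat.eq_zero_or_pos (Nat.find (hac x)) with h0 | h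
    · exfalso
      have := Nat.find_spec (hac x)
      rw [h0, Function.iterate_zero_apply] at this
      exact hx this
    · exact h
  have h2 : (Fext i r)^[Nat.find (hac x) - 1] (Fext i r x) = i := by
    have hs := Nat.find_spec (hac x)
    rw [show Nat.find (hac x) = (Nat.find (hac x) - 1) + 1 from by omega,
      Function.iterate_succ_apply] at hs
    exact hs
  have hle2 : Nat.find (hac (Fext i r x)) ≤ Nat.find (hac x) - 1 := Nat.find_le h2
  omega

lemma core_det (C : Fin n → Fin n → Bool) (hC : ∀ v, C v v = false) (i : Fin n) :
    minor1 (lap C) i =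
      (Set.ncard {r : {x : Fin n // x ≠ i} → Fin n |
        (∀ v, C v.1 (r v) = true) ∧ Acyc i r} : ℝ) := by
  classical
  set N : {x : Fin n // x ≠ i} → Finset (Fin n) :=
    fun v => Finset.univ.filter (fun w => C v.1 w = true) with hNdef
  set g : {x : Fin n // x ≠ i} → Fin n → ({x : Fin n // x ≠ i} → ℝ) :=
    fun v w u => (if (u : Fin n) = v.1 then 1 else 0) - (if (u : Fin n) = w then 1 else 0)
    with hgdef
  have hrow : ((lap C).submatrix (fun a : {x : Fin n // x ≠ i} => (a : Fin n))
      (fun a : {x : Fin n // x ≠ i} => (a : Fin n)))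
      = Matrix.of (fun v : {x : Fin n // x ≠ i} => ∑ w ∈ N v, g v w) := by
    ext v u
    simp only [Matrix.submatrix_apply, Matrix.of_apply, lap, hgdef]
    rw [Finset.sum_apply]
    rw [Finset.sum_sub_distrib, Finset.sum_const, Finset.sum_ite_eq (N v) (u : Fin n)
      (fun _ => (1:ℝ))]
    by_cases h : (u : Fin n) = v.1
    · have hmem : (u : Fin n) ∉ N v := by
        simp [hNdef, h, hC]
      rw [if_pos h, if_neg hmem, if_pos h.symm]
      simp [outdeg, hNdef]
    · have : ¬ (v.1 = (u : Fin n)) := fun hh => h hh.symm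
      rw [if_neg h, if_neg this]
      by_cases hcw : C v.1 u.1 = true
      · simp [hNdef, hcw]
      · simp [hNdef, hcw]
  have hdet : minor1 (lap C) i = ∑ r ∈ Fintype.piFinset N,
      Matrix.det (Matrix.of fun v u => g v (r v) u) := by
    show Matrix.det _ = _
    rw [hrow]
    exact (Matrix.detRowAlternating :
      ({x : Fin n // x ≠ i} → ℝ) [⋀^{x : Fin n // x ≠ i}]→ₗ[ℝ] ℝ).toMultilinearMap.map_sum_finset g N
  have hterm : ∀ r ∈ Fintype.piFinset N,
      Matrix.det (Matrix.of fun v u => g v (r v) u) = if Acyc i r then 1 else 0 := by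
    intro r hr
    rw [Fintype.mem_piFinset] at hr
    have hrC : ∀ v, C v.1 (r v) = true := by
      intro v; have := hr v; simpa [hNdef] using this
    by_cases hac : Acyc i r
    · rw [if_pos hac]
      set d : Fin n → ℕ := fun x => Nat.find (hac x) with hddef
      have hdd : ∀ v : {x : Fin n // x ≠ i}, d (r v) + 1 = d v.1 := by
        intro v
        have := dist_succ hac v.2
        rwa [Fext_coe] at this
      have hbt : (Matrix.of fun v u => g v (r v) u).BlockTriangular
          (fun v : {x : Fin n // x ≠ i} => -(d v.1 : ℤ)) := by
        intro u w hlt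
        have hdlt : d u.1 < d w.1 := by
          have h := hlt
          simp only [neg_lt_neg_iff, Nat.cast_lt] at h
          exact h
        have h1 : (w.1 : Fin n) ≠ u.1 := fun h => by rw [h] at hdlt; omega
        have h2 : (w.1 : Fin n) ≠ r u := by
          intro h
          have := hdd u
          rw [← h] at this
          omega
        simp [hgdef, h1, h2]
      rw [hbt.det]
      apply Finset.prod_eq_one
      intro a _
      have hblock : (Matrix.of fun v u => g v (r v) u).toSquareBlock
          (fun v : {x : Fin n // x ≠ i} => -(d v.1 : ℤ)) a = 1 := by
        ext u w
        have hdu : -(d u.1.1 : ℤ) = a := u.2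
        have hdw : -(d w.1.1 : ℤ) = a := w.2
        have hdeq : d u.1.1 = d w.1.1 := by omega
        by_cases huw : u = w
        · subst huw
          have h2 : (u.1.1 : Fin n) ≠ r u.1 := by
            intro h
            have := hdd u.1
            rw [← h] at this
            omega
          simp [Matrix.toSquareBlock_def, hgdef, h2, Matrix.one_apply]
        · have hsne : u.1 ≠ w.1 := fun h => huw (Subtype.ext h)
          have h1 : (w.1.1 : Fin n) ≠ u.1.1 := fun h => hsne (Subtype.ext h.symm)
          have h2 : (w.1.1 : Fin n) ≠ r u.1 := by
            intro h
            have := hdd u.1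
            rw [← h] at this
            omega
          simp [Matrix.toSquareBlock_def, hgdef, h1, h2, Matrix.one_apply, huw]
      rw [hblock, Matrix.det_one]
    · rw [if_neg hac]
      rw [Acyc] at hac
      push_neg at hac
      obtain ⟨v0, hv0⟩ := hac
      set F := Fext i r with hF
      obtain ⟨a, b, hab, heq⟩ := Finite.exists_ne_map_eq_of_infinite (fun k : ℕ => F^[k] v0)
      wlog hlt : a < b generalizing a b
      · exact this b a (Ne.symm hab) heq.symm (by omega)
      set v1 := F^[a] v0 with hv1
      set p := b - a with hp
      have hppos : 0 < p := by omega
      have hper : F^[p] v1 = v1 := by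
        rw [hv1, ← Function.iterate_add_apply, hp]
        rw [show b - a + a = b from by omega]
        exact heq.symm
      have hOne : ∀ m : ℕ, F^[m] v1 ≠ i := by
        intro m
        rw [hv1, ← Function.iterate_add_apply]
        exact hv0 (m + a)
      have hperO : ∀ m : ℕ, F^[p] (F^[m] v1) = F^[m] v1 := by
        intro m
        rw [← Function.iterate_add_apply, Nat.add_comm, Function.iterate_add_apply, hper]
      have hstep : ∀ s : ℕ, F^[p-1] (F (F^[s] v1)) = F^[s] v1 := by
        intro s
        have h1 := hperO s
        rw [show p = p - 1 + 1 from by omega, Function.iterate_succ_apply] at h1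
        exact h1
      have hinj : ∀ s t : ℕ, F (F^[s] v1) = F (F^[t] v1) → F^[s] v1 = F^[t] v1 := by
        intro s t h
        rw [← hstep s, ← hstep t, h]
      set O : Set (Fin n) := Set.range (fun m : ℕ => F^[m] v1) with hO
      set c : {x : Fin n // x ≠ i} → ℝ := fun u => if (u : Fin n) ∈ O then 1 else 0 with hc
      have hcne : c ≠ 0 := by
        intro h
        have h1 : c ⟨v1, hOne 0⟩ = 1 := by
          simp only [hc]
          rw [if_pos ⟨0, rfl⟩]
        rw [h] at h1
        simpa using h1
      have hFr : ∀ v : {x : Fin n // x ≠ i}, F v.1 = r v := fun v => Fext_coe r v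
      have hvm : Matrix.vecMul c (Matrix.of fun v u => g v (r v) u) = 0 := by
        funext u
        show (∑ v, c v * g v (r v) u) = 0
        have hsplit : ∀ v : {x : Fin n // x ≠ i},
            c v * g v (r v) u
              = c v * (if (u : Fin n) = v.1 then 1 else 0)
                - c v * (if (u : Fin n) = r v then 1 else 0) := by
          intro v; rw [hgdef]; ring
        rw [Finset.sum_congr rfl (fun v _ => hsplit v), Finset.sum_sub_distrib]
        have hsum1 : (∑ v : {x : Fin n // x ≠ i},
            c v * (if (u : Fin n) = v.1 then 1 else 0)) = c u := by
          rw [Finset.sum_eq_single u]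
          · simp
          · intro v _ hvu
            have : (u : Fin n) ≠ v.1 := fun h => hvu (Subtype.ext h.symm)
            simp [this]
          · intro h; exact absurd (Finset.mem_univ u) h
        have hsum2 : (∑ v : {x : Fin n // x ≠ i},
            c v * (if (u : Fin n) = r v then 1 else 0)) = c u := by
          by_cases hu : (u : Fin n) ∈ O
          · obtain ⟨m, hm⟩ := hu
            have hm : F^[m] v1 = (u : Fin n) := hm
            set y := F^[m + (p-1)] v1 with hy
            have hyne : y ≠ i := hOne _
            have hFy : F y = (u : Fin n) := by
              have h0 : F^[p + m] v1 = (u : Fin n) := by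
                rw [Function.iterate_add_apply, hperO m]; exact hm
              rw [show p + m = (m + (p-1)) + 1 from by omega,
                Function.iterate_succ_apply'] at h0
              exact h0
            rw [Finset.sum_eq_single ⟨y, hyne⟩]
            · have hcy : c ⟨y, hyne⟩ = 1 := by
                simp only [hc]
                rw [if_pos ⟨m + (p-1), rfl⟩]
              have hry : (u : Fin n) = r ⟨y, hyne⟩ := by
                rw [← hFr ⟨y, hyne⟩]
                exact hFy.symm
              have hcu : c u = 1 := by
                simp only [hc]
                rw [if_pos ⟨m, hm⟩]
              rw [hcy, hcu, if_pos hry, one_mul]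
            · intro v _ hvy
              by_cases hvO : (v : Fin n) ∈ O
              · obtain ⟨s, hs⟩ := hvO
                have hs : F^[s] v1 = (v : Fin n) := hs
                have : (u : Fin n) ≠ r v := by
                  intro h
                  have hFv : F v.1 = (u : Fin n) := by rw [hFr]; exact h.symm
                  have : F (F^[s] v1) = F (F^[m + (p-1)] v1) := by
                    rw [hs, ← hy]
                    rw [hFv, hFy]
                  have := hinj s (m + (p-1)) this
                  rw [hs, ← hy] at this
                  exact hvy (Subtype.ext this)
                rw [if_neg this, mul_zero]
              · have : c v = 0 := by simp only [hc]; rw [if_neg hvO]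
                rw [this, zero_mul]
            · intro h; exact absurd (Finset.mem_univ _) h
          · have hcu : c u = 0 := by simp only [hc]; rw [if_neg hu]
            rw [hcu]
            apply Finset.sum_eq_zero
            intro v _
            by_cases hvO : (v : Fin n) ∈ O
            · obtain ⟨s, hs⟩ := hvO
              have hs : F^[s] v1 = (v : Fin n) := hs
              have : (u : Fin n) ≠ r v := by
                intro h
                apply hu
                refine ⟨s + 1, ?_⟩
                show F^[s+1] v1 = (u : Fin n)
                rw [Function.iterate_succ_apply', hs, hFr, ← h]
              rw [if_neg this, mul_zero]
            · have : c v = 0 := by simp only [hc]; rw [if_neg hvO]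
              rw [this, zero_mul]
        rw [hsum1, hsum2, sub_self]
      exact Matrix.exists_vecMul_eq_zero_iff.mp ⟨c, hcne, hvm⟩
  rw [hdet, Finset.sum_congr rfl hterm, Finset.sum_boole]
  congr 1
  rw [← Nat.card_coe_set_eq, Nat.card_eq_fintype_card]
  rw [Fintype.card_subtype]
  congr 1
  ext r
  simp only [Finset.mem_filter, Finset.mem_univ, true_and, Fintype.mem_piFinset,
    Set.mem_setOf_eq, hNdef]

lemma toT_spanning (A : Fin n → Fin n → Bool) (i : Fin n)
    (r : {x : Fin n // x ≠ i} → Fin n)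
    (h1 : ∀ v, A (r v) v.1 = true) (h2 : Acyc i r) :
    IsSpanningTree A i
      (Finset.univ.image (fun v : {x : Fin n // x ≠ i} => (r v, v.1))) := by
  classical
  set T := Finset.univ.image (fun v : {x : Fin n // x ≠ i} => (r v, v.1)) with hT
  refine ⟨?_, ?_, ?_, ?_⟩
  · intro e he
    rw [hT, Finset.mem_image] at he
    obtain ⟨v, _, hv⟩ := he
    rw [← hv]
    exact h1 v
  · show (T.filter (fun e => e.2 = i)).card = 0
    rw [Finset.card_eq_zero, Finset.filter_eq_empty_iff]
    intro e he
    rw [hT, Finset.mem_image] at he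
    obtain ⟨v, _, hv⟩ := he
    rw [← hv]
    exact v.2
  · intro w hw
    show (T.filter (fun e => e.2 = w)).card = 1
    rw [Finset.card_eq_one]
    refine ⟨(r ⟨w, hw⟩, w), ?_⟩
    ext e
    rw [Finset.mem_filter, Finset.mem_singleton, hT, Finset.mem_image]
    constructor
    · rintro ⟨⟨v, _, hv⟩, he2⟩
      rw [← hv] at he2 ⊢
      simp only at he2
      have : v = ⟨w, hw⟩ := Subtype.ext he2
      rw [this]
    · rintro rfl
      exact ⟨⟨⟨w, hw⟩, Finset.mem_univ _, rfl⟩, rfl⟩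
  · have hreach : ∀ m (x : Fin n), Nat.find (h2 x) ≤ m → ReachIn T i x := by
      intro m
      induction m with
      | zero =>
        intro x hx
        have hs := Nat.find_spec (h2 x)
        rw [Nat.le_zero.mp hx, Function.iterate_zero_apply] at hs
        subst hs
        exact Relation.ReflTransGen.refl
      | succ m ih =>
        intro x hx
        by_cases hxi : x = i
        · subst hxi; exact Relation.ReflTransGen.refl
        · have hds := dist_succ h2 hxi
          have hle : Nat.find (h2 (Fext i r x)) ≤ m := by omega
          have hr' := ih _ hle
          have hF : Fext i r x = r ⟨x, hxi⟩ := by simp [Fext, hxi]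
          have hmem : (r ⟨x, hxi⟩, x) ∈ T := by
            rw [hT, Finset.mem_image]
            exact ⟨⟨x, hxi⟩, Finset.mem_univ _, rfl⟩
          rw [hF] at hr'
          exact Relation.ReflTransGen.tail hr' hmem
    intro x
    exact hreach (Nat.find (h2 x)) x le_rfl

lemma tree_card (A : Fin n → Fin n → Bool) (i : Fin n) :
    Nat.card {T : Finset (Fin n × Fin n) | IsSpanningTree A i T}
      = Nat.card {r : {x : Fin n // x ≠ i} → Fin n |
          (∀ v, A (r v) v.1 = true) ∧ Acyc i r} := by
  classical
  symm
  apply Nat.card_eq_of_bijective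
    (f := fun rp : {r : {x : Fin n // x ≠ i} → Fin n |
        (∀ v, A (r v) v.1 = true) ∧ Acyc i r} =>
      (⟨Finset.univ.image (fun v : {x : Fin n // x ≠ i} => (rp.1 v, v.1)),
        toT_spanning A i rp.1 rp.2.1 rp.2.2⟩ :
        {T : Finset (Fin n × Fin n) | IsSpanningTree A i T}))
  constructor
  · rintro ⟨r1, hr1⟩ ⟨r2, hr2⟩ h
    have hval := congrArg Subtype.val h
    simp only at hval
    refine Subtype.ext (funext fun v => ?_)
    have hmem : (r1 v, v.1) ∈ Finset.univ.image
        (fun v : {x : Fin n // x ≠ i} => (r2 v, v.1)) := by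
      rw [← hval, Finset.mem_image]
      exact ⟨v, Finset.mem_univ _, rfl⟩
    rw [Finset.mem_image] at hmem
    obtain ⟨u, _, hu⟩ := hmem
    have h2 : u = v := Subtype.ext (congrArg Prod.snd hu)
    rw [h2] at hu
    exact (congrArg Prod.fst hu).symm
  · rintro ⟨T, hTe, hTi, hT1, hTr⟩
    have hcard : ∀ v : {x : Fin n // x ≠ i},
        (T.filter (fun e => e.2 = v.1)).card = 1 := fun v => hT1 v.1 v.2
    choose ev hev using fun v => Finset.card_eq_one.mp (hcard v)
    have hevT : ∀ v, ev v ∈ T ∧ (ev v).2 = v.1 := by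
      intro v
      have hm : ev v ∈ T.filter (fun e => e.2 = v.1) := by
        rw [hev v]; exact Finset.mem_singleton_self _
      rw [Finset.mem_filter] at hm
      exact hm
    set r : {x : Fin n // x ≠ i} → Fin n := fun v => (ev v).1 with hrdef
    have hmemT : ∀ v, (r v, v.1) ∈ T := by
      intro v
      have h := hevT v
      have : (r v, v.1) = ev v := by
        rw [hrdef]
        exact Prod.ext rfl h.2.symm
      rw [this]
      exact h.1
    have huniq : ∀ (v : {x : Fin n // x ≠ i}) (e : Fin n × Fin n),
        e ∈ T → e.2 = v.1 → e = (r v, v.1) := by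
      intro v e he he2
      have hm : e ∈ T.filter (fun e => e.2 = v.1) := Finset.mem_filter.mpr ⟨he, he2⟩
      rw [hev v, Finset.mem_singleton] at hm
      rw [hm]
      have h := hevT v
      rw [hrdef]
      exact Prod.ext rfl h.2
    have hnoti : ∀ e ∈ T, e.2 ≠ i := by
      intro e he hei
      have h0 : (T.filter (fun e => e.2 = i)).card = 0 := hTi
      rw [Finset.card_eq_zero] at h0
      have hm : e ∈ T.filter (fun e => e.2 = i) := Finset.mem_filter.mpr ⟨he, hei⟩
      rw [h0] at hm
      exact absurd hm (Finset.notMem_empty e)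
    have hAr : ∀ v, A (r v) v.1 = true := fun v => hTe _ (hmemT v)
    have hacy : Acyc i r := by
      intro x
      have hreach := hTr x
      induction hreach with
      | refl => exact ⟨0, rfl⟩
      | @tail b c hab hbc ih =>
        obtain ⟨k, hk⟩ := ih
        have hci : c ≠ i := hnoti (b, c) hbc
        have heq : (b, c) = (r ⟨c, hci⟩, c) := huniq ⟨c, hci⟩ (b, c) hbc rfl
        have hFc : Fext i r c = b := by
          rw [Fext]
          simp only [hci, dif_neg]
          exact (congrArg Prod.fst heq).symm
        exact ⟨k + 1, by rw [Function.iterate_succ_apply, hFc, hk]⟩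
    refine ⟨⟨r, hAr, hacy⟩, ?_⟩
    apply Subtype.ext
    show Finset.univ.image (fun v : {x : Fin n // x ≠ i} => (r v, v.1)) = T
    ext e
    rw [Finset.mem_image]
    constructor
    · rintro ⟨v, _, hv⟩
      rw [← hv]
      exact hmemT v
    · intro he
      refine ⟨⟨e.2, hnoti e he⟩, Finset.mem_univ _, ?_⟩
      exact (huniq ⟨e.2, hnoti e he⟩ e he rfl).symm

end MTTaux

/-- matrix tree theorem for strongly connected balanced digraphs:
the number of spanning trees rooted at `i` equals `det L[{i}ᶜ,{i}ᶜ]`. -/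
theorem stmt_3 {n : ℕ} (A : Fin n → Fin n → Bool) (hA : ∀ i, A i i = false)
    (hsc : StronglyConnected A) (hbal : IsBalanced A) (i : Fin n) :
    (Set.ncard {T : Finset (Fin n × Fin n) | IsSpanningTree A i T} : ℝ) =
      minor1 (lap A) i := by
  classical
  have hBloop : ∀ v, (fun v w => A w v) v v = false := fun v => hA v
  have hlapB : lap (fun v w => A w v) = (lap A)ᵀ := by
    ext v w
    by_cases h : v = w
    · subst h
      simp only [lap, Matrix.transpose_apply, Matrix.of_apply, if_pos rfl]
      have h1 : outdeg (fun v w => A w v) v = indeg A v := rfl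
      rw [h1, hbal v]
    · have h' : w ≠ v := Ne.symm h
      simp only [lap, Matrix.transpose_apply, Matrix.of_apply, if_neg h, if_neg h']
  have hm : minor1 (lap A) i = minor1 (lap (fun v w => A w v)) i := by
    unfold minor1
    rw [hlapB, ← Matrix.transpose_submatrix, Matrix.det_transpose]
  rw [hm, core_det (fun v w => A w v) hBloop i]
  congr 1
  rw [← Nat.card_coe_set_eq, ← Nat.card_coe_set_eq]
  exact tree_card A i
end

section
/- Let G be a strongly connected balanced digraph on n vertices with Laplacian L and let κ(G) be the common value of all cofactors of L (the number of rooted spanning trees). If (i,j) or (j,i) is a directed edge of G, then det(L[{i,j}ᶜ,{i,j}ᶜ]) ≤ κ(G). -/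
open Matrix Finset

/-! The cofactors of `L` all agree: `L` kills the constant vectors on the right, and also on the
left since `G` is balanced, so by the maximum principle both kernels are the constants and
`adj L` is a constant matrix. For an edge `j → i`, splitting row `j` of `L[{i}ᶜ,{i}ᶜ]` as
`(row − e_j) + e_j` gives `κ(G) = det N + det L[{i,j}ᶜ,{i,j}ᶜ]`, where `N` still has nonpositive
off-diagonal entries and nonnegative row sums, hence `det N ≥ 0`. The edge `i → j` reduces to
this case by reversing all edges, which transposes `L` because `G` is balanced. -/

namespace Matrix

variable {m : Type*} [Fintype m] [DecidableEq m]

theorem det_updateRow_single_eq_det_submatrix {R : Type*} [CommRing R] (M : Matrix m m R)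
    (k : m) :
    (M.updateRow k (Pi.single k 1)).det = (M.submatrix ((↑) : {x // x ≠ k} → m) (↑)).det := by
  rw [twoBlockTriangular_det' _ (· = k) fun i hi j hj => by simp [hi, hj]]
  simp only [det_unique, toSquareBlockProp, toBlock, submatrix_apply]
  rw [(default : {a : m // a = k}).2, updateRow_self, Pi.single_eq_same, one_mul]
  congr 1
  ext a b
  simp only [submatrix_apply, updateRow_ne a.2]

theorem det_eq_det_updateRow_sub_single_add_det_submatrix {R : Type*} [CommRing R]
    (M : Matrix m m R) (k : m) :
    M.det = (M.updateRow k (M k - Pi.single k 1)).det +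
      (M.submatrix ((↑) : {x // x ≠ k} → m) (↑)).det := by
  rw [← det_updateRow_single_eq_det_submatrix, ← det_updateRow_add, sub_add_cancel,
    updateRow_eq_self]

theorem mulVec_col_eq_zero_of_mul_eq_zero {R : Type*} [CommRing R] {M N : Matrix m m R}
    (h : M * N = 0) (k : m) : M *ᵥ N.col k = 0 := by
  rw [← mulVec_single_one, mulVec_mulVec, h, zero_mulVec]

theorem det_nonneg_of_offDiag_nonpos_of_sum_row_nonneg (B : Matrix m m ℝ)
    (hoff : ∀ v w, v ≠ w → B v w ≤ 0) (hrow : ∀ v, 0 ≤ ∑ w, B v w) : 0 ≤ B.det := by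
  -- For `s < 1`, `s • B + (1 - s) • 1` is strictly diagonally dominant, so `h` has no zero on
  -- `[0, 1)` and stays positive there; `det B = h 1` is a limit of these values.
  set h : ℝ → ℝ := fun s => (s • B + (1 - s) • (1 : Matrix m m ℝ)).det with h_def
  have hcont : Continuous h := by fun_prop
  have hne : ∀ s, 0 ≤ s → s < 1 → h s ≠ 0 := by
    intro s hs₀ hs₁
    apply det_ne_zero_of_sum_row_lt_diag
    intro v
    have hoffsum : ∑ w ∈ univ.erase v, -B v w ≤ B v v := by
      rw [sum_neg_distrib, sum_erase_eq_sub (mem_univ v)]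
      linarith [hrow v]
    have hBvv : 0 ≤ B v v :=
      (sum_nonneg fun w hw => neg_nonneg.2 (hoff v w (ne_of_mem_erase hw).symm)).trans hoffsum
    calc ∑ w ∈ univ.erase v, ‖(s • B + (1 - s) • (1 : Matrix m m ℝ)) v w‖
        = s * ∑ w ∈ univ.erase v, -B v w := by
          rw [mul_sum]
          refine sum_congr rfl fun w hw => ?_
          have hvw : v ≠ w := (ne_of_mem_erase hw).symm
          simp only [add_apply, smul_apply, one_apply_ne hvw, smul_eq_mul, mul_zero, add_zero,
            norm_mul, Real.norm_of_nonneg hs₀, Real.norm_of_nonpos (hoff v w hvw)]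
      _ ≤ s * B v v := mul_le_mul_of_nonneg_left hoffsum hs₀
      _ < s * B v v + (1 - s) := by linarith
      _ = ‖(s • B + (1 - s) • (1 : Matrix m m ℝ)) v v‖ := by
          simp only [add_apply, smul_apply, one_apply_eq, smul_eq_mul, mul_one]
          exact (Real.norm_of_nonneg (by nlinarith)).symm
  have hpos : ∀ s, 0 ≤ s → s < 1 → 0 < h s := by
    intro s hs₀ hs₁
    by_contra! hle
    have h0 : h 0 = 1 := by simp [h_def]
    obtain ⟨c, hc, hc0⟩ :=
      intermediate_value_Icc' hs₀ hcont.continuousOn ⟨hle, by rw [h0]; norm_num⟩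
    exact hne c hc.1 (hc.2.trans_lt hs₁) hc0
  have h1 : h 1 = B.det := by simp [h_def]
  rw [← h1]
  refine ge_of_tendsto ((hcont.tendsto 1).mono_left (nhdsWithin_le_nhds (s := Set.Iio 1))) ?_
  filter_upwards [Ioo_mem_nhdsLT zero_lt_one] with s hs
  exact (hpos s hs.1.le hs.2).le

end Matrix

theorem minor1_eq_adjugate_apply {n : ℕ} (L : Matrix (Fin n) (Fin n) ℝ) (k : Fin n) :
    minor1 L k = L.adjugate k k := by
  rw [adjugate_apply, det_updateRow_single_eq_det_submatrix]
  rfl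

theorem minor1_transpose {n : ℕ} (L : Matrix (Fin n) (Fin n) ℝ) (k : Fin n) :
    minor1 Lᵀ k = minor1 L k := by
  rw [minor1, ← transpose_submatrix, det_transpose, minor1]

theorem minor2_transpose {n : ℕ} (L : Matrix (Fin n) (Fin n) ℝ) (i j : Fin n) :
    minor2 Lᵀ i j = minor2 L i j := by
  rw [minor2, ← transpose_submatrix, det_transpose, minor2]

theorem minor2_eq_det_submatrix_submatrix {n : ℕ} (L : Matrix (Fin n) (Fin n) ℝ) {i j : Fin n}
    (hji : j ≠ i) :
    minor2 L i j =
      ((L.submatrix (Subtype.val : {x : Fin n // x ≠ i} → Fin n) Subtype.val).submatrix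
        (Subtype.val : {y : {x : Fin n // x ≠ i} // y ≠ ⟨j, hji⟩} → _) Subtype.val).det := by
  let e : {y : {x : Fin n // x ≠ i} // y ≠ ⟨j, hji⟩} ≃ {x // x ≠ i ∧ x ≠ j} :=
    (Equiv.subtypeEquivRight fun y => Subtype.ext_iff.not).trans
      (Equiv.subtypeSubtypeEquivSubtypeInter (· ≠ i) (· ≠ j))
  exact det_submatrix_equiv_self e.symm
    ((L.submatrix (Subtype.val : {x : Fin n // x ≠ i} → Fin n) Subtype.val).submatrix
      Subtype.val Subtype.val)

section Laplacian

variable {n : ℕ} {A : Fin n → Fin n → Bool}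

theorem lap_apply_nonpos_of_ne {v w : Fin n} (h : v ≠ w) : lap A v w ≤ 0 := by
  simp only [lap, of_apply, if_neg h]
  split <;> norm_num

theorem lap_eq_diagonal_sub (hA : ∀ i, A i i = false) :
    lap A = diagonal (fun v => (outdeg A v : ℝ)) - of fun v w => if A v w then 1 else 0 := by
  ext v w
  by_cases hvw : v = w
  · subst hvw
    simp [lap, hA]
  · simp only [lap, Matrix.sub_apply, of_apply, diagonal_apply_ne _ hvw, if_neg hvw]
    split <;> norm_num

theorem lap_mulVec_apply (hA : ∀ i, A i i = false) (x : Fin n → ℝ) (u : Fin n) :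
    (lap A *ᵥ x) u = outdeg A u * x u - ∑ w ∈ univ.filter (A u · = true), x w := by
  rw [lap_eq_diagonal_sub hA, sub_mulVec, Pi.sub_apply, mulVec_diagonal]
  simp [mulVec, dotProduct, sum_filter]

theorem lap_mulVec_one (hA : ∀ i, A i i = false) : lap A *ᵥ (fun _ => 1) = 0 := by
  ext u
  simp [lap_mulVec_apply hA, outdeg]

theorem det_lap_eq_zero [Nonempty (Fin n)] (hA : ∀ i, A i i = false) : (lap A).det = 0 :=
  exists_mulVec_eq_zero_iff.1
    ⟨_, fun h => one_ne_zero (congrFun h (Classical.arbitrary _)), lap_mulVec_one hA⟩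

theorem StronglyConnected.eq_of_lap_mulVec_eq_zero (hsc : StronglyConnected A)
    (hA : ∀ i, A i i = false) {x : Fin n → ℝ} (hx : lap A *ᵥ x = 0) (a b : Fin n) :
    x a = x b := by
  obtain ⟨v₀, -, hmax⟩ := exists_max_image univ x ⟨a, mem_univ a⟩
  -- Maximum principle: at a maximum `u` of `x`, `outdeg u * x u` is the sum of `x` over the
  -- out-neighbours of `u`, so these are maxima too.
  have step : ∀ u w, x u = x v₀ → A u w = true → x w = x v₀ := by
    intro u w hu huw
    have hsum : ∑ w ∈ univ.filter (A u · = true), x w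
        = ∑ w ∈ univ.filter (A u · = true), x v₀ := by
      have := congrFun hx u
      rw [lap_mulVec_apply hA, hu, Pi.zero_apply] at this
      rw [sum_const, nsmul_eq_mul]
      simp only [outdeg] at this
      linarith
    exact (sum_eq_sum_iff_of_le fun w _ => hmax w (mem_univ w)).1 hsum w (by simpa using huw)
  have hall : ∀ w, x w = x v₀ := fun w => by
    induction hsc v₀ w with
    | refl => rfl
    | tail _ hedge ih => exact step _ _ ih hedge
  rw [hall a, hall b]

theorem StronglyConnected.flip (hsc : StronglyConnected A) : StronglyConnected (flip A) :=
  fun i j => Relation.ReflTransGen.swap i j (hsc j i)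

theorem IsBalanced.lap_flip (hbal : IsBalanced A) : lap (flip A) = (lap A)ᵀ := by
  ext v w
  by_cases hvw : v = w
  · subst hvw
    simp only [lap, of_apply, transpose_apply]
    exact congrArg Nat.cast (hbal v)
  · simp only [lap, of_apply, transpose_apply, if_neg hvw, if_neg (Ne.symm hvw)]
    rfl

theorem sum_lap_row_eq_zero (hA : ∀ i, A i i = false) (v : Fin n) : ∑ w, lap A v w = 0 := by
  simpa [mulVec, dotProduct] using congrFun (lap_mulVec_one hA) v

theorem sum_lap_row_subtype_ne (hA : ∀ i, A i i = false) (v i : Fin n) :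
    ∑ w : {x // x ≠ i}, lap A v w = -lap A v i := by
  rw [← sum_subtype (univ.erase i) (by simp) (lap A v), sum_erase_eq_sub (mem_univ i),
    sum_lap_row_eq_zero hA, zero_sub]

theorem minor1_lap_eq (hA : ∀ i, A i i = false) (hsc : StronglyConnected A)
    (hbal : IsBalanced A) (k l : Fin n) : minor1 (lap A) k = minor1 (lap A) l := by
  have : Nonempty (Fin n) := ⟨k⟩
  have hdet := det_lap_eq_zero hA
  have hcol : lap A *ᵥ (lap A).adjugate.col k = 0 :=
    mulVec_col_eq_zero_of_mul_eq_zero (by rw [mul_adjugate, hdet, zero_smul]) k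
  have hrow : lap (flip A) *ᵥ (lap A).adjugateᵀ.col l = 0 :=
    mulVec_col_eq_zero_of_mul_eq_zero
      (by rw [hbal.lap_flip, ← transpose_mul, adjugate_mul, hdet, zero_smul, transpose_zero]) l
  rw [minor1_eq_adjugate_apply, minor1_eq_adjugate_apply]
  exact (hsc.eq_of_lap_mulVec_eq_zero hA hcol k l).trans
    (hsc.flip.eq_of_lap_mulVec_eq_zero hA hrow k l)

theorem minor2_lap_le_minor1_lap (hA : ∀ i, A i i = false) {i j : Fin n} (hji : A j i = true) :
    minor2 (lap A) i j ≤ minor1 (lap A) i := by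
  have hji' : j ≠ i := by rintro rfl; simp [hA] at hji
  set L := (lap A).submatrix (Subtype.val : {x : Fin n // x ≠ i} → Fin n) Subtype.val
  set j' : {x : Fin n // x ≠ i} := ⟨j, hji'⟩
  have hnonneg : 0 ≤ (L.updateRow j' (L j' - Pi.single j' 1)).det := by
    apply det_nonneg_of_offDiag_nonpos_of_sum_row_nonneg
    · intro v w hvw
      have hL : L v w ≤ 0 := lap_apply_nonpos_of_ne (Subtype.val_injective.ne hvw)
      rcases eq_or_ne v j' with rfl | hv
      · simpa [Pi.single_eq_of_ne hvw.symm] using hL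
      · rwa [updateRow_ne hv]
    · intro v
      rcases eq_or_ne v j' with rfl | hv
      · have hLji : lap A j i = -1 := by simp [lap, hji', hji]
        simp only [updateRow_self, Pi.sub_apply, sum_sub_distrib, sum_pi_single', mem_univ,
          if_true, L, submatrix_apply, sum_lap_row_subtype_ne hA, j', hLji]
        norm_num
      · simp only [updateRow_ne hv, L, submatrix_apply, sum_lap_row_subtype_ne hA]
        exact neg_nonneg.2 (lap_apply_nonpos_of_ne v.2)
  rw [minor2_eq_det_submatrix_submatrix _ hji', minor1,
    det_eq_det_updateRow_sub_single_add_det_submatrix L j']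
  linarith

end Laplacian

/-- if `(i,j)` or `(j,i)` is an edge of a strongly connected balanced
digraph then `det L[{i,j}ᶜ,{i,j}ᶜ] ≤ κ(G)` (the common cofactor). -/
theorem stmt_5 {n : ℕ} (A : Fin n → Fin n → Bool) (hA : ∀ i, A i i = false)
    (hsc : StronglyConnected A) (hbal : IsBalanced A)
    (i j : Fin n) (hedge : A i j = true ∨ A j i = true) :
    ∀ k : Fin n, minor2 (lap A) i j ≤ minor1 (lap A) k := by
  intro k
  rw [minor1_lap_eq hA hsc hbal k i]
  rcases hedge with hij | hji
  · have h := minor2_lap_le_minor1_lap (A := flip A) hA hij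
    rwa [hbal.lap_flip, minor2_transpose, minor1_transpose] at h
  · exact minor2_lap_le_minor1_lap hA hji
end

section
/- A strongly connected digraph G is a directed cactus (every edge lies in exactly one directed cycle) if and only if any two directed cycles of G share at most one common vertex. -/
/-!
Two cycles through the same edge `(i, j)` share the two vertices `i ≠ j`, and strong
connectivity closes every edge `(i, j)` into a cycle through a simple path from `j` back to `i`.
Conversely, let every edge lie on a unique cycle and let cycles `C₁`, `C₂` share two vertices.
Walking along `C₁` from a common vertex `u` to the next vertex `y` of `C₂`, and back along `C₂`
from `y` to `u`, gives a cycle `C₃` (simple, as the first arc avoids `C₂`). It shares an edge with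
`C₁` and one with `C₂`, so `C₁ = C₃ = C₂`.
-/

open Matrix Finset

section PathEdges

variable {α : Type*}

def pathEdges (a : α) : List α → List (α × α)
  | [] => []
  | b :: l => (a, b) :: pathEdges b l

@[simp] lemma pathEdges_nil (a : α) : pathEdges a [] = [] := rfl

@[simp] lemma pathEdges_cons (a b : α) (l : List α) :
    pathEdges a (b :: l) = (a, b) :: pathEdges b l := rfl

@[simp] lemma pathEdges_eq_nil {a : α} {l : List α} : pathEdges a l = [] ↔ l = [] := by
  cases l <;> simp

lemma pathEdges_append_cons (a b : α) (l₁ l₂ : List α) :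
    pathEdges a (l₁ ++ b :: l₂) = pathEdges a (l₁ ++ [b]) ++ pathEdges b l₂ := by
  induction l₁ generalizing a with
  | nil => simp
  | cons c l ih => simp [ih]

@[simp] lemma map_fst_pathEdges (a : α) (l : List α) :
    (pathEdges a l).map Prod.fst = (a :: l).dropLast := by
  induction l generalizing a with
  | nil => rfl
  | cons b l ih => simp [ih]

@[simp] lemma map_snd_pathEdges (a : α) (l : List α) :
    (pathEdges a l).map Prod.snd = l := by
  induction l generalizing a with
  | nil => rfl
  | cons b l ih => simp [ih]

lemma zip_cons_concat (a b : α) (l : List α) :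
    (a :: l).zip (l ++ [b]) = pathEdges a (l ++ [b]) := by
  induction l generalizing a with
  | nil => rfl
  | cons c l ih => simp [ih]

lemma zip_rotate_one_eq_pathEdges (a : α) (l : List α) :
    (a :: l).zip ((a :: l).rotate 1) = pathEdges a (l ++ [a]) := by
  rw [List.rotate_cons_succ, List.rotate_zero, zip_cons_concat]

lemma pathEdges_rotate_perm (a b : α) (l₁ l₂ : List α) :
    (pathEdges a (l₁ ++ b :: l₂ ++ [a])).Perm (pathEdges b (l₂ ++ a :: l₁ ++ [b])) := by
  simp only [List.append_assoc, List.cons_append]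
  rw [pathEdges_append_cons a b l₁, pathEdges_append_cons b a l₂ (l₁ ++ [b])]
  exact List.perm_append_comm

lemma pathEdges_subset_of_append_cons (a b : α) (l₁ l₂ : List α) :
    pathEdges a (l₁ ++ [b]) ⊆ pathEdges a (l₁ ++ b :: l₂) := by
  rw [pathEdges_append_cons a b l₁ l₂]
  exact List.subset_append_left _ _

lemma isChain_cons_iff_forall_mem_pathEdges {R : α → α → Prop} {a : α} {l : List α} :
    List.IsChain R (a :: l) ↔ ∀ e ∈ pathEdges a l, R e.1 e.2 := by
  induction l generalizing a with
  | nil => simp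
  | cons b l ih => simp [ih]

end PathEdges

lemma Relation.ReflTransGen.exists_nodup_isChain {α : Type*} {r : α → α → Prop} {a b : α}
    (h : Relation.ReflTransGen r a b) :
    ∃ l, (a :: l).Nodup ∧ List.IsChain r (a :: l) ∧
      (a :: l).getLast (List.cons_ne_nil a l) = b := by
  induction h using Relation.ReflTransGen.head_induction_on with
  | refl => exact ⟨[], by simp, by simp, rfl⟩
  | @head a c hac _ ih =>
    obtain ⟨l, hnd, hchain, hlast⟩ := ih
    by_cases ha : a ∈ c :: l
    · obtain ⟨l₁, l₂, hcl⟩ := List.append_of_mem ha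
      have hsuffix : (a :: l₂) <:+ (c :: l) := hcl ▸ List.suffix_append l₁ (a :: l₂)
      refine ⟨l₂, hnd.sublist hsuffix.sublist, hchain.suffix hsuffix, ?_⟩
      rw [← hlast]
      simp only [hcl, List.getLast_append_of_ne_nil _ (List.cons_ne_nil a l₂)]
    · exact ⟨c :: l, List.nodup_cons.mpr ⟨ha, hnd⟩, List.isChain_cons_cons.mpr ⟨hac, hchain⟩,
        by rw [List.getLast_cons_cons, hlast]⟩

lemma List.exists_eq_append_cons_of_exists {α : Type*} {p : α → Prop} [DecidablePred p]
    {l : List α} (h : ∃ a ∈ l, p a) :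
    ∃ l₁ a l₂, l = l₁ ++ a :: l₂ ∧ p a ∧ ∀ b ∈ l₁, ¬ p b := by
  obtain ⟨a, ha⟩ := Option.isSome_iff_exists.mp
    ((List.find?_isSome (xs := l) (p := fun a => decide (p a))).mpr (by simpa using h))
  obtain ⟨hpa, l₁, l₂, rfl, hl₁⟩ := List.find?_eq_some_iff_append.mp ha
  exact ⟨l₁, a, l₂, rfl, by simpa using hpa, by simpa using hl₁⟩

section Cycles

variable {n : ℕ} {A : Fin n → Fin n → Bool} {s : Finset (Fin n × Fin n)}

lemma cycVerts_pathEdges (x : Fin n) (t : List (Fin n)) :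
    cycVerts (pathEdges x (t ++ [x])).toFinset = (x :: t).toFinset := by
  ext a
  have hfst := map_fst_pathEdges x (t ++ [x])
  rw [← List.cons_append, List.dropLast_concat] at hfst
  simp only [cycVerts, Finset.mem_image, List.mem_toFinset, ← hfst, List.mem_map]

lemma isCycle_pathEdges {x : Fin n} {t : List (Fin n)} (hnd : (x :: t).Nodup) (ht : t ≠ [])
    (hA : ∀ e ∈ pathEdges x (t ++ [x]), A e.1 e.2 = true) :
    IsCycle A (pathEdges x (t ++ [x])).toFinset := by
  refine ⟨x :: t, ?_, hnd, ?_, ?_⟩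
  · cases t with
    | nil => exact absurd rfl ht
    | cons => simp
  · rwa [zip_rotate_one_eq_pathEdges]
  · rw [zip_rotate_one_eq_pathEdges]

lemma IsCycle.adj_of_mem (h : IsCycle A s) {e : Fin n × Fin n} (he : e ∈ s) :
    A e.1 e.2 = true := by
  obtain ⟨c, -, -, hA, rfl⟩ := h
  exact hA _ (List.mem_toFinset.mp he)

lemma fst_mem_cycVerts {a b : Fin n} (he : (a, b) ∈ s) : a ∈ cycVerts s :=
  Finset.mem_image_of_mem Prod.fst he

lemma IsCycle.exists_eq_pathEdges (h : IsCycle A s) {v : Fin n} (hv : v ∈ cycVerts s) :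
    ∃ t, (v :: t).Nodup ∧ s = (pathEdges v (t ++ [v])).toFinset := by
  obtain ⟨_ | ⟨x, t⟩, -, hnd, -, rfl⟩ := h
  · simp [cycVerts] at hv
  rw [zip_rotate_one_eq_pathEdges] at hv ⊢
  rw [cycVerts_pathEdges, List.mem_toFinset, List.mem_cons] at hv
  rcases hv with rfl | hv
  · exact ⟨t, hnd, rfl⟩
  obtain ⟨l₁, l₂, rfl⟩ := List.append_of_mem hv
  refine ⟨l₂ ++ x :: l₁, ?_, List.toFinset_eq_of_perm _ _ (pathEdges_rotate_perm x v l₁ l₂)⟩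
  exact (List.perm_append_comm (l₁ := x :: l₁) (l₂ := v :: l₂)).nodup_iff.mp (by simpa using hnd)

lemma IsCycle.snd_mem_cycVerts (h : IsCycle A s) {a b : Fin n} (he : (a, b) ∈ s) :
    b ∈ cycVerts s := by
  obtain ⟨t, -, rfl⟩ := h.exists_eq_pathEdges (fst_mem_cycVerts he)
  have hb : b ∈ t ++ [a] := by
    rw [← map_snd_pathEdges a (t ++ [a])]
    exact List.mem_map_of_mem (List.mem_toFinset.mp he)
  rw [cycVerts_pathEdges, List.mem_toFinset]
  grind

lemma isCycle_pathEdges_append {u y : Fin n} {p p' : List (Fin n)}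
    (hp : (u :: (p ++ [y])).Nodup) (hp' : (y :: (p' ++ [u])).Nodup) (hdisj : p.Disjoint p')
    (hA : ∀ e ∈ pathEdges u (p ++ [y]) ++ pathEdges y (p' ++ [u]), A e.1 e.2 = true) :
    IsCycle A (pathEdges u (p ++ [y]) ++ pathEdges y (p' ++ [u])).toFinset := by
  have hsplit : pathEdges u (p ++ y :: p' ++ [u]) =
      pathEdges u (p ++ [y]) ++ pathEdges y (p' ++ [u]) := by
    rw [List.append_assoc, List.cons_append, pathEdges_append_cons]
  rw [← hsplit] at hA ⊢
  refine isCycle_pathEdges ?_ (by simp) hA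
  simp only [List.nodup_cons, List.nodup_append, List.mem_append, List.mem_cons] at hp hp' ⊢
  grind [List.Disjoint]

lemma mem_of_mem_cycVerts_pathEdges {x v : Fin n} {t : List (Fin n)}
    (hv : v ∈ cycVerts (pathEdges x (t ++ [x])).toFinset) (hvx : v ≠ x) : v ∈ t := by
  rw [cycVerts_pathEdges, List.mem_toFinset, List.mem_cons] at hv
  exact hv.resolve_left hvx

theorem exists_isCycle_inter_nonempty_of_one_lt_card {s₁ s₂ : Finset (Fin n × Fin n)}
    (h₁ : IsCycle A s₁) (h₂ : IsCycle A s₂) (hcard : 1 < (cycVerts s₁ ∩ cycVerts s₂).card) :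
    ∃ s₃, IsCycle A s₃ ∧ (s₁ ∩ s₃).Nonempty ∧ (s₂ ∩ s₃).Nonempty := by
  obtain ⟨u, hu, v, hv, huv⟩ := Finset.one_lt_card.mp hcard
  rw [Finset.mem_inter] at hu hv
  obtain ⟨t, hnd, rfl⟩ := h₁.exists_eq_pathEdges hu.1
  obtain ⟨p, y, q, rfl, hy, hp⟩ := List.exists_eq_append_cons_of_exists (p := (· ∈ cycVerts s₂))
    ⟨v, mem_of_mem_cycVerts_pathEdges hv.1 (Ne.symm huv), hv.2⟩
  obtain ⟨t₂, hnd₂, rfl⟩ := h₂.exists_eq_pathEdges hy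
  have huy : u ≠ y := by grind
  obtain ⟨p', q', rfl⟩ := List.append_of_mem (mem_of_mem_cycVerts_pathEdges hu.2 huy)
  have hsub₁ : pathEdges u (p ++ [y]) ⊆ pathEdges u (p ++ y :: q ++ [u]) := by
    simpa using pathEdges_subset_of_append_cons u y p (q ++ [u])
  have hsub₂ : pathEdges y (p' ++ [u]) ⊆ pathEdges y (p' ++ u :: q' ++ [y]) := by
    simpa using pathEdges_subset_of_append_cons y u p' (q' ++ [y])
  refine ⟨(pathEdges u (p ++ [y]) ++ pathEdges y (p' ++ [u])).toFinset,
    isCycle_pathEdges_append (hnd.sublist (by simp)) (hnd₂.sublist (by simp))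
    (fun w hw hw' => hp w hw ?_) fun e he => ?_, ?_, ?_⟩
  · rw [cycVerts_pathEdges]
    simp [hw']
  · rcases List.mem_append.mp he with he | he
    · exact h₁.adj_of_mem (List.mem_toFinset.mpr (hsub₁ he))
    · exact h₂.adj_of_mem (List.mem_toFinset.mpr (hsub₂ he))
  · obtain ⟨e, he⟩ := List.exists_mem_of_ne_nil (pathEdges u (p ++ [y])) (by simp)
    exact ⟨e, Finset.mem_inter.mpr ⟨List.mem_toFinset.mpr (hsub₁ he),
      List.mem_toFinset.mpr (List.mem_append_left _ he)⟩⟩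
  · obtain ⟨e, he⟩ := List.exists_mem_of_ne_nil (pathEdges y (p' ++ [u])) (by simp)
    exact ⟨e, Finset.mem_inter.mpr ⟨List.mem_toFinset.mpr (hsub₂ he),
      List.mem_toFinset.mpr (List.mem_append_right _ he)⟩⟩

theorem card_inter_cycVerts_le_one_of_existsUnique
    (huniq : ∀ i j, A i j = true → ∃! s : Finset (Fin n × Fin n), IsCycle A s ∧ (i, j) ∈ s)
    {s₁ s₂ : Finset (Fin n × Fin n)} (h₁ : IsCycle A s₁) (h₂ : IsCycle A s₂) (hne : s₁ ≠ s₂) :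
    (cycVerts s₁ ∩ cycVerts s₂).card ≤ 1 := by
  have eq_of_inter_nonempty {s s' : Finset (Fin n × Fin n)} (h : IsCycle A s) (h' : IsCycle A s')
      (hss' : (s ∩ s').Nonempty) : s = s' := by
    obtain ⟨e, he⟩ := hss'
    rw [Finset.mem_inter] at he
    exact (huniq e.1 e.2 (h.adj_of_mem he.1)).unique ⟨h, he.1⟩ ⟨h', he.2⟩
  by_contra! hcard
  obtain ⟨s₃, h₃, h₁₃, h₂₃⟩ := exists_isCycle_inter_nonempty_of_one_lt_card h₁ h₂ hcard
  exact hne ((eq_of_inter_nonempty h₁ h₃ h₁₃).trans (eq_of_inter_nonempty h₂ h₃ h₂₃).symm)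

lemma exists_isCycle_mem_of_reach {i j : Fin n} (hij : A i j = true) (hne : i ≠ j)
    (hji : Reach A j i) : ∃ s, IsCycle A s ∧ (i, j) ∈ s := by
  obtain ⟨l, hnd, hchain, hlast⟩ := Relation.ReflTransGen.exists_nodup_isChain hji
  obtain ⟨l', rfl⟩ : ∃ l', l = l' ++ [i] := by
    rcases l.eq_nil_or_concat with rfl | ⟨l', x, rfl⟩
    · exact absurd hlast.symm hne
    · exact ⟨l', by simpa using hlast⟩
  refine ⟨(pathEdges i (j :: l' ++ [i])).toFinset, isCycle_pathEdges ?_ (by simp) ?_, by simp⟩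
  · refine (List.perm_append_comm (l₁ := [i]) (l₂ := j :: l')).nodup_iff.mpr ?_
    simpa using hnd
  · simpa [hij] using isChain_cons_iff_forall_mem_pathEdges.mp hchain

lemma existsUnique_isCycle_mem_of_card_inter_cycVerts_le_one (hA : ∀ i, A i i = false)
    (hsc : StronglyConnected A)
    (hcard : ∀ s₁ s₂ : Finset (Fin n × Fin n), IsCycle A s₁ → IsCycle A s₂ → s₁ ≠ s₂ →
      (cycVerts s₁ ∩ cycVerts s₂).card ≤ 1)
    {i j : Fin n} (hij : A i j = true) :
    ∃! s : Finset (Fin n × Fin n), IsCycle A s ∧ (i, j) ∈ s := by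
  have hne : i ≠ j := by
    rintro rfl
    simp [hA] at hij
  obtain ⟨s, hs⟩ := exists_isCycle_mem_of_reach hij hne (hsc j i)
  refine ⟨s, hs, fun s' hs' => by_contra fun hss' => ?_⟩
  have hi : i ∈ cycVerts s' ∩ cycVerts s :=
    Finset.mem_inter.mpr ⟨fst_mem_cycVerts hs'.2, fst_mem_cycVerts hs.2⟩
  have hj : j ∈ cycVerts s' ∩ cycVerts s :=
    Finset.mem_inter.mpr ⟨hs'.1.snd_mem_cycVerts hs'.2, hs.1.snd_mem_cycVerts hs.2⟩
  exact (hcard s' s hs'.1 hs.1 hss').not_gt (Finset.one_lt_card.mpr ⟨i, hi, j, hj, hne⟩)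

end Cycles

/-- a strongly connected digraph has each edge in exactly one directed
cycle iff any two distinct directed cycles share at most one vertex. -/
theorem stmt_8 {n : ℕ} (A : Fin n → Fin n → Bool) (hA : ∀ i, A i i = false)
    (hsc : StronglyConnected A) :
    (∀ i j : Fin n, A i j = true →
        ∃! s : Finset (Fin n × Fin n), IsCycle A s ∧ (i, j) ∈ s) ↔
    (∀ s₁ s₂ : Finset (Fin n × Fin n), IsCycle A s₁ → IsCycle A s₂ → s₁ ≠ s₂ →
        (cycVerts s₁ ∩ cycVerts s₂).card ≤ 1) :=
  ⟨fun h _ _ => card_inter_cycVerts_le_one_of_existsUnique h,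
    fun h _ _ => existsUnique_isCycle_mem_of_card_inter_cycVerts_le_one hA hsc h⟩
end

section
/- Let G be a directed cactus graph on n vertices. Then for any two vertices i and j, there is a unique directed path from i to j. -/
open Matrix Finset

/-!
Induct along a walk from `j` back to `i`. If `j → y` is its first edge and the path `i ⤳ y` is
unique, a path `i ⤳ j` either avoids `y`, and then is the unique path `i ⤳ y` minus its last
vertex, or passes through `y`, and then is the unique path `i ⤳ y` followed by a path `y ⤳ j`.
The latter closes, with the edge `j → y`, a cycle through `j → y`; as that cycle is unique and
each of its vertices has a single successor on it, the path `y ⤳ j` is unique too.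
-/

namespace List

variable {α : Type*}

theorem IsChain.rel_of_mem_zip_tail {R : α → α → Prop} :
    ∀ {l : List α}, l.IsChain R → ∀ p ∈ l.zip l.tail, R p.1 p.2
  | [], _, _, hp | [_], _, _, hp => by simp at hp
  | a :: b :: l, h, p, hp => by
    rw [isChain_cons_cons] at h
    rcases mem_cons.mp hp with rfl | hp
    · exact h.1
    · exact h.2.rel_of_mem_zip_tail p hp

theorem isChain_mem_zip_tail : ∀ l : List α, l.IsChain (fun a b => (a, b) ∈ l.zip l.tail)
  | [] | [_] => by simp
  | a :: b :: l => by
    refine isChain_cons_cons.mpr ⟨by simp, (isChain_mem_zip_tail (b :: l)).imp ?_⟩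
    intro x y hxy
    exact mem_cons_of_mem _ hxy

theorem zip_tail_append_singleton (x : α) :
    ∀ (l : List α) (hl : l ≠ []), l.zip (l.tail ++ [x]) = l.zip l.tail ++ [(l.getLast hl, x)]
  | [_], _ => rfl
  | a :: b :: l, _ => by
    simp only [tail_cons, cons_append, zip_cons_cons, getLast_cons_cons]
    exact congrArg _ (zip_tail_append_singleton x (b :: l) (cons_ne_nil b l))

theorem zip_rotate_one_eq (l : List α) (hl : l ≠ []) :
    l.zip (l.rotate 1) = l.zip l.tail ++ [(l.getLast hl, l.head hl)] := by
  obtain ⟨a, t, rfl⟩ := exists_cons_of_ne_nil hl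
  simpa using zip_tail_append_singleton a (a :: t) hl

theorem Nodup.eq_of_mem_zip {l : List α} {r : List α} (hn : l.Nodup) {a b c : α}
    (hb : (a, b) ∈ l.zip r) (hc : (a, c) ∈ l.zip r) : b = c := by
  obtain ⟨k, hk, hkb⟩ := mem_iff_getElem.mp hb
  obtain ⟨k', hk', hkc⟩ := mem_iff_getElem.mp hc
  simp only [getElem_zip, Prod.mk.injEq] at hkb hkc
  obtain rfl : k = k' := hn.getElem_inj_iff.mp (hkb.1.trans hkc.1.symm)
  exact hkb.2.symm.trans hkc.2

theorem eq_of_isChain_of_functional {R : α → α → Prop}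
    (hR : ∀ a b c, R a b → R a c → b = c) :
    ∀ {l₁ l₂ : List α}, l₁.IsChain R → l₂.IsChain R → l₁.Nodup → l₂.Nodup →
      l₁.head? = l₂.head? → l₁.getLast? = l₂.getLast? → l₁ = l₂
  | [], [], _, _, _, _, _, _ => rfl
  | [], _ :: _, _, _, _, _, h, _ | _ :: _, [], _, _, _, _, h, _ => by simp at h
  | [_], [_], _, _, _, _, h, _ => by simpa using h
  | [x], x' :: y :: l, _, _, _, hn, hhead, hlast => by
    obtain rfl : x = x' := by simpa using hhead
    rw [getLast?_singleton, getLast?_cons_cons, eq_comm] at hlast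
    exact absurd (mem_of_getLast? hlast) (nodup_cons.mp hn).1
  | x :: y :: l, [x'], _, _, hn, _, hhead, hlast => by
    obtain rfl : x = x' := by simpa using hhead
    rw [getLast?_singleton, getLast?_cons_cons] at hlast
    exact absurd (mem_of_getLast? hlast) (nodup_cons.mp hn).1
  | x :: y :: l, x' :: y' :: l', h₁, h₂, hn₁, hn₂, hhead, hlast => by
    obtain rfl : x = x' := by simpa using hhead
    rw [isChain_cons_cons] at h₁ h₂
    obtain rfl : y = y' := hR x y y' h₁.1 h₂.1
    rw [getLast?_cons_cons, getLast?_cons_cons] at hlast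
    rw [eq_of_isChain_of_functional hR h₁.2 h₂.2 hn₁.of_cons hn₂.of_cons rfl hlast]

end List

def cycleEdges {α : Type*} [DecidableEq α] (c : List α) : Finset (α × α) :=
  (c.zip (c.rotate 1)).toFinset

theorem isChain_mem_cycleEdges {α : Type*} [DecidableEq α] (l : List α) :
    l.IsChain (fun a b => (a, b) ∈ cycleEdges l) := by
  rcases eq_or_ne l [] with rfl | hl
  · exact List.isChain_nil
  refine (List.isChain_mem_zip_tail l).imp fun a b hab => ?_
  rw [cycleEdges, List.mem_toFinset, List.zip_rotate_one_eq l hl]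
  exact List.mem_append_left _ hab

namespace IsPath

variable {n : ℕ} {A : Fin n → Fin n → Bool} {i j : Fin n} {p : List (Fin n)}

theorem ne_nil (hp : IsPath A i j p) : p ≠ [] := by
  rintro rfl
  simp [IsPath] at hp

theorem head_eq (hp : IsPath A i j p) : p.head hp.ne_nil = i := by
  simpa [List.head?_eq_some_head hp.ne_nil] using hp.2.1

theorem getLast_eq (hp : IsPath A i j p) : p.getLast hp.ne_nil = j := by
  simpa [List.getLast?_eq_some_getLast hp.ne_nil] using hp.2.2.1

theorem eq_singleton (hp : IsPath A i i p) : p = [i] := by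
  obtain ⟨a, t, rfl⟩ := List.exists_cons_of_ne_nil hp.ne_nil
  obtain ⟨-, hh, hl, hn⟩ := hp
  obtain rfl : a = i := by simpa using hh
  rcases t with _ | ⟨b, t⟩
  · rfl
  · rw [List.getLast?_cons_cons] at hl
    exact absurd (List.mem_of_getLast? hl) (List.nodup_cons.mp hn).1

theorem concat {c : Fin n} (hp : IsPath A i j p) (hjc : A j c = true) (hc : c ∉ p) :
    IsPath A i c (p ++ [c]) := by
  obtain ⟨hch, hh, hl, hn⟩ := hp
  refine ⟨hch.append (List.isChain_singleton c) ?_, ?_, List.getLast?_concat, ?_⟩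
  · intro x hx y hy
    simp_all
  · simp [List.head?_append, hh]
  · exact List.nodup_append.mpr ⟨hn, List.nodup_singleton c, fun x hx y hy => by
      rintro rfl
      exact hc (List.mem_singleton.mp hy ▸ hx)⟩

theorem of_append_cons_left {y : Fin n} {a b : List (Fin n)} (hp : IsPath A i j (a ++ y :: b)) :
    IsPath A i y (a ++ [y]) := by
  obtain ⟨hch, hh, -, hn⟩ := hp
  rw [← List.singleton_append, ← List.append_assoc] at hch hn
  refine ⟨(List.isChain_append.mp hch).1, ?_, List.getLast?_concat, (List.nodup_append.mp hn).1⟩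
  simpa [List.head?_append] using hh

theorem of_append_cons_right {y : Fin n} {a b : List (Fin n)} (hp : IsPath A i j (a ++ y :: b)) :
    IsPath A y j (y :: b) := by
  obtain ⟨hch, -, hl, hn⟩ := hp
  refine ⟨(List.isChain_append.mp hch).2.1, rfl, ?_, (List.nodup_append.mp hn).2.1⟩
  rwa [List.getLast?_append_of_ne_nil _ (List.cons_ne_nil y b)] at hl

theorem isCycle_cycleEdges {u v : Fin n} (hp : IsPath A v u p) (hvu : v ≠ u)
    (huv : A u v = true) : IsCycle A (cycleEdges p) ∧ (u, v) ∈ cycleEdges p := by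
  have hzip := List.zip_rotate_one_eq p hp.ne_nil
  rw [hp.head_eq, hp.getLast_eq] at hzip
  have hlen : 2 ≤ p.length := by
    obtain ⟨a, t, rfl⟩ := List.exists_cons_of_ne_nil hp.ne_nil
    rcases t with _ | ⟨b, t⟩
    · exact absurd ((Option.some_inj.mp hp.2.1).symm.trans (Option.some_inj.mp hp.2.2.1)) hvu
    · simp
  refine ⟨⟨p, hlen, hp.2.2.2, fun e he => ?_, rfl⟩, ?_⟩
  · rw [hzip, List.mem_append, List.mem_singleton] at he
    rcases he with he | rfl
    · exact hp.1.rel_of_mem_zip_tail e he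
    · exact huv
  · simp [cycleEdges, hzip]

end IsPath

section Cactus

variable {n : ℕ} {A : Fin n → Fin n → Bool}

theorem exists_isPath_of_reach {i j : Fin n} (h : Reach A i j) : ∃ p, IsPath A i j p := by
  induction h with
  | refl => exact ⟨[i], List.isChain_singleton i, rfl, rfl, List.nodup_singleton i⟩
  | @tail b c _ hbc ih =>
    obtain ⟨p, hp⟩ := ih
    by_cases hc : c ∈ p
    · obtain ⟨a, b', rfl⟩ := List.append_of_mem hc
      exact ⟨a ++ [c], hp.of_append_cons_left⟩
    · exact ⟨p ++ [c], hp.concat hbc hc⟩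

theorem IsPath.eq_of_edge
    (hcyc : ∀ i j : Fin n, A i j = true → ∃! s, IsCycle A s ∧ (i, j) ∈ s)
    {u v : Fin n} (huv : A u v = true) {p q : List (Fin n)}
    (hp : IsPath A v u p) (hq : IsPath A v u q) : p = q := by
  rcases eq_or_ne v u with rfl | hvu
  · rw [hp.eq_singleton, hq.eq_singleton]
  obtain ⟨s, -, hs⟩ := hcyc u v huv
  have hpq : cycleEdges q = cycleEdges p :=
    (hs _ (hq.isCycle_cycleEdges hvu huv)).trans (hs _ (hp.isCycle_cycleEdges hvu huv)).symm
  refine List.eq_of_isChain_of_functional (R := fun a b => (a, b) ∈ cycleEdges p)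
    (fun a b c hb hc => hp.2.2.2.eq_of_mem_zip (List.mem_toFinset.mp hb)
      (List.mem_toFinset.mp hc))
    (isChain_mem_cycleEdges p) (hpq ▸ isChain_mem_cycleEdges q) hp.2.2.2 hq.2.2.2
    (hp.2.1.trans hq.2.1.symm) (hp.2.2.1.trans hq.2.2.1.symm)

theorem IsPath.mem_of_mem_of_edge {i j y : Fin n}
    (huniq : ∀ P Q, IsPath A i y P → IsPath A i y Q → P = Q) (hjy : A j y = true)
    {P Q : List (Fin n)} (hP : IsPath A i j P) (hQ : IsPath A i j Q) (hyP : y ∈ P) : y ∈ Q := by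
  by_contra hyQ
  obtain ⟨a, b, rfl⟩ := List.append_of_mem hyP
  obtain rfl : a = Q :=
    List.append_cancel_right (huniq _ _ hP.of_append_cons_left (hQ.concat hjy hyQ))
  have hja : j ∈ a := List.mem_of_getLast? hQ.2.2.1
  have hjb : j ∈ y :: b := List.mem_of_getLast? hP.of_append_cons_right.2.2.1
  exact List.disjoint_of_nodup_append hP.2.2.2 hja hjb

theorem IsPath.eq_of_reach
    (hcyc : ∀ i j : Fin n, A i j = true → ∃! s, IsCycle A s ∧ (i, j) ∈ s)
    {i j : Fin n} (hji : Reach A j i) {P Q : List (Fin n)}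
    (hP : IsPath A i j P) (hQ : IsPath A i j Q) : P = Q := by
  induction hji using Relation.ReflTransGen.head_induction_on generalizing P Q with
  | refl => rw [hP.eq_singleton, hQ.eq_singleton]
  | @head j y hjy _ ih =>
    by_cases hyP : y ∈ P
    · have hyQ := mem_of_mem_of_edge (fun _ _ => ih) hjy hP hQ hyP
      obtain ⟨a, b, rfl⟩ := List.append_of_mem hyP
      obtain ⟨a', b', rfl⟩ := List.append_of_mem hyQ
      rw [List.append_cancel_right (ih hP.of_append_cons_left hQ.of_append_cons_left),
        eq_of_edge hcyc hjy hP.of_append_cons_right hQ.of_append_cons_right]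
    · have hyQ : y ∉ Q := fun h => hyP (mem_of_mem_of_edge (fun _ _ => ih) hjy hQ hP h)
      exact List.append_cancel_right (ih (hP.concat hjy hyP) (hQ.concat hjy hyQ))

end Cactus

theorem stmt_10_general {n : ℕ} (A : Fin n → Fin n → Bool)
    (hcact : IsCactus A) (i j : Fin n) :
    ∃! p : List (Fin n), IsPath A i j p := by
  obtain ⟨P, hP⟩ := exists_isPath_of_reach (hcact.1 i j)
  exact ⟨P, hP, fun Q hQ => hQ.eq_of_reach hcact.2 (hcact.1 j i) hP⟩

/-- in a directed cactus the directed path between any two vertices is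
unique. -/
theorem stmt_10 {n : ℕ} (A : Fin n → Fin n → Bool) (hA : ∀ i, A i i = false)
    (hcact : IsCactus A) (i j : Fin n) :
    ∃! p : List (Fin n), IsPath A i j p :=
  stmt_10_general A hcact i j
end

section
/- Let G = (V,E) be a directed cactus graph and let (i,j) ∈ E with both i and j of degree greater than one. Define V_j(i→) = {k ∈ V∖{i,j} : there exists a directed path from i to k not passing through j} and V_i(j→) analogously. Then V is the disjoint union of {i,j}, V_j(i→), and V_i(j→). -/
/-!
In a cactus, two internally disjoint paths `P`, `Q` from `x` to `y ≠ x` have the same vertex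
set. Follow a return path from `y` to `x` up to its first vertex `t` on `P` or `Q`. If `t = x`,
closing `P` and `Q` with this return segment gives two cycles through its last edge, which must
coincide. Otherwise `t` is an inner vertex of, say, `P`; then `P` cut at `t` and `Q` followed by the
return segment up to `t` form the same configuration with a shorter return path, yet only the
second one contains `y`.

If some `k` were reachable from `i` avoiding `j` and from `j` avoiding `i`, then the path
`i → j → ⋯` and the `j`-free path from `i`, cut at their first common vertex, would be such a
pair of paths, and only one of them contains `j`.
-/

open Matrix Finset

theorem List.exists_eq_append_cons_of_exists_mem {α : Type*} {l : List α} {P : α → Prop}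
    (h : ∃ a ∈ l, P a) : ∃ w t d, l = w ++ t :: d ∧ P t ∧ ∀ a ∈ w, ¬ P a := by
  classical
  obtain ⟨t, ht⟩ := Option.isSome_iff_exists.mp
    (List.find?_isSome (p := fun a => decide (P a)) |>.mpr (by simpa using h))
  obtain ⟨hPt, w, d, rfl, hw⟩ := List.find?_eq_some_iff_append.mp ht
  exact ⟨w, t, d, rfl, by simpa using hPt, fun a ha => by simpa using hw a ha⟩

theorem List.mem_zip_rotate_one {α : Type*} {l : List α} {e : α × α} :
    e ∈ l.zip (l.rotate 1) ↔ ∃ (k : ℕ) (hk : k < l.length),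
      e = (l[k], l[(k + 1) % l.length]'(Nat.mod_lt _ (by omega))) := by
  simp [List.mem_iff_getElem, eq_comm]

section

variable {n : ℕ} {A : Fin n → Fin n → Bool}

namespace IsPath

variable {x y z t : Fin n} {p q s u : List (Fin n)}

theorem eq_cons (h : IsPath A x y p) : ∃ l, p = x :: l :=
  List.head?_eq_some_iff.mp h.2.1

theorem head_mem (h : IsPath A x y p) : x ∈ p :=
  List.mem_of_mem_head? h.2.1

theorem getLast_mem (h : IsPath A x y p) : y ∈ p :=
  List.mem_of_mem_getLast? h.2.2.1

theorem cons (hxz : A x z = true) (h : IsPath A z y p) (hx : x ∉ p) :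
    IsPath A x y (x :: p) := by
  obtain ⟨l, rfl⟩ := h.eq_cons
  exact ⟨h.1.cons_cons hxz, rfl, List.getLast?_cons_cons.trans h.2.2.1, h.2.2.2.cons hx⟩

theorem takeUntil (h : IsPath A x y (s ++ t :: u)) : IsPath A x t (s ++ [t]) := by
  obtain ⟨hc, hh, -, hnd⟩ := h
  refine ⟨?_, ?_, List.getLast?_concat, ?_⟩
  · exact List.IsChain.left_of_append (l₂ := u) (by rw [List.append_assoc]; exact hc)
  · cases s <;> simpa using hh
  · exact ((List.nil_sublist u).cons_cons t |>.append_left s).nodup hnd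

theorem dropUntil (h : IsPath A x y (s ++ t :: u)) : IsPath A t y (t :: u) := by
  obtain ⟨hc, -, hl, hnd⟩ := h
  refine ⟨hc.right_of_append, rfl, ?_, hnd.sublist (List.sublist_append_right s _)⟩
  rwa [List.getLast?_append_of_ne_nil _ (List.cons_ne_nil t u)] at hl

theorem append (hp : IsPath A x y p) (hq : IsPath A y z q) (hpq : ∀ v ∈ p, v ∈ q → v = y) :
    IsPath A x z (p ++ q.tail) := by
  obtain ⟨l, rfl⟩ := hq.eq_cons
  obtain ⟨p', rfl⟩ := List.getLast?_eq_some_iff.mp hp.2.2.1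
  have hyl : y ∉ l := (List.nodup_cons.mp hq.2.2.2).1
  refine ⟨?_, ?_, ?_, ?_⟩
  · exact hp.1.append_overlap (l₃ := l) hq.1 (List.cons_ne_nil y [])
  · cases p' <;> simpa using hp.2.1
  · simpa [List.getLast?_append] using hq.2.2.1
  · refine List.nodup_append.mpr ⟨hp.2.2.2, hq.2.2.2.of_cons, ?_⟩
    rintro a ha b hb rfl
    exact hyl (hpq a ha (List.mem_cons_of_mem y hb) ▸ hb)

theorem two_le_length (h : IsPath A x y p) (hxy : x ≠ y) : 2 ≤ p.length := by
  obtain ⟨l, rfl⟩ := h.eq_cons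
  rcases l with _ | ⟨b, l⟩
  · exact absurd (by simpa using h.2.2.1) hxy
  · simp

end IsPath

theorem Reach.exists_isPath {x y : Fin n} (h : Reach A x y) : ∃ p, IsPath A x y p := by
  induction h using Relation.ReflTransGen.head_induction_on with
  | refl => exact ⟨[y], List.isChain_singleton y, rfl, rfl, List.nodup_singleton y⟩
  | @head a c hac _ ih =>
    obtain ⟨p, hp⟩ := ih
    by_cases ha : a ∈ p
    · obtain ⟨s, u, rfl⟩ := List.append_of_mem ha
      exact ⟨_, hp.dropUntil⟩
    · exact ⟨_, hp.cons hac ha⟩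

theorem cycVerts_zip_rotate_one (l : List (Fin n)) :
    cycVerts (l.zip (l.rotate 1)).toFinset = l.toFinset := by
  simp only [cycVerts, List.toFinset, Finset.image_toFinset, Multiset.map_coe]
  rw [List.map_fst_zip (by simp)]

theorem IsCycle.ne_of_mem {s : Finset (Fin n × Fin n)} (hs : IsCycle A s) {a b : Fin n}
    (hab : (a, b) ∈ s) : a ≠ b := by
  obtain ⟨l, hlen, hnd, -, rfl⟩ := hs
  obtain ⟨k, hk, hab⟩ := List.mem_zip_rotate_one.mp (List.mem_toFinset.mp hab)
  simp only [Prod.mk.injEq] at hab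
  rw [hab.1, hab.2, Ne, hnd.getElem_inj_iff]
  rcases Nat.lt_or_ge (k + 1) l.length with h | h
  · rw [Nat.mod_eq_of_lt h]; omega
  · rw [show k + 1 = l.length by omega, Nat.mod_self]; omega

theorem IsCactus.ne_of_adj (hA : IsCactus A) {a b : Fin n} (hab : A a b = true) : a ≠ b := by
  obtain ⟨s, ⟨hs, habs⟩, -⟩ := hA.2 a b hab
  exact hs.ne_of_mem habs

theorem IsPath.isCycle_zip_rotate_one {x y : Fin n} {p : List (Fin n)} (hp : IsPath A x y p)
    (hxy : x ≠ y) (hyx : A y x = true) :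
    IsCycle A (p.zip (p.rotate 1)).toFinset ∧ (y, x) ∈ (p.zip (p.rotate 1)).toFinset := by
  have hlen := hp.two_le_length hxy
  have hx : p[0] = x := by
    simpa [List.head?_eq_getElem?, List.getElem?_eq_getElem (by omega : 0 < p.length)] using hp.2.1
  have hy : p[p.length - 1] = y := by
    simpa [List.getLast?_eq_getElem?, List.getElem?_eq_getElem (by omega : p.length - 1 < p.length)]
      using hp.2.2.1
  refine ⟨⟨p, hlen, hp.2.2.2, fun e he => ?_, rfl⟩, ?_⟩
  · obtain ⟨k, hk, rfl⟩ := List.mem_zip_rotate_one.mp he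
    rcases Nat.lt_or_ge (k + 1) p.length with h | h
    · simp only [Nat.mod_eq_of_lt h]
      exact List.isChain_iff_getElem.mp hp.1 k h
    · obtain rfl : k = p.length - 1 := by omega
      simpa [show p.length - 1 + 1 = p.length by omega, hx, hy] using hyx
  · rw [List.mem_toFinset, List.mem_zip_rotate_one]
    refine ⟨p.length - 1, by omega, ?_⟩
    simp [show p.length - 1 + 1 = p.length by omega, hx, hy]

theorem IsCactus.toFinset_eq_of_adj (hA : IsCactus A) {x y : Fin n} {p q : List (Fin n)}
    (hyx : A y x = true) (hp : IsPath A x y p) (hq : IsPath A x y q) :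
    p.toFinset = q.toFinset := by
  have hxy := (hA.ne_of_adj hyx).symm
  obtain ⟨s, -, hs⟩ := hA.2 y x hyx
  rw [← cycVerts_zip_rotate_one, ← cycVerts_zip_rotate_one,
    hs _ (hp.isCycle_zip_rotate_one hxy hyx), hs _ (hq.isCycle_zip_rotate_one hxy hyx)]

theorem IsCactus.toFinset_eq_of_return (hA : IsCactus A) {x y : Fin n} {P Q w : List (Fin n)}
    (hP : IsPath A x y P) (hQ : IsPath A x y Q) (hR : IsPath A y x (y :: w ++ [x]))
    (hwP : ∀ v ∈ w, v ∉ P) (hwQ : ∀ v ∈ w, v ∉ Q) : P.toFinset = Q.toFinset := by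
  obtain ⟨l, z, hlz⟩ : ∃ l z, y :: w = l ++ [z] := by
    simpa using (List.eq_nil_or_concat (y :: w)).resolve_left (List.cons_ne_nil y w)
  rw [hlz, List.append_assoc, List.singleton_append] at hR
  have hzx : A z x = true :=
    (List.isChain_pair (R := fun a b => A a b = true)).mp (List.isChain_append.mp hR.1).2.1
  have hyz : IsPath A y z (y :: w) := hlz ▸ hR.takeUntil
  have hcycle : (P ++ w).toFinset = (Q ++ w).toFinset := by
    refine hA.toFinset_eq_of_adj hzx (hP.append hyz ?_) (hQ.append hyz ?_) <;>
      intro v hv hvw <;> rcases List.mem_cons.mp hvw with rfl | hvw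
    exacts [rfl, absurd hv (hwP v hvw), rfl, absurd hv (hwQ v hvw)]
  have hdisj {R : List (Fin n)} (h : ∀ v ∈ w, v ∉ R) : Disjoint R.toFinset w.toFinset :=
    Finset.disjoint_right.mpr fun v hv => by simpa using h v (List.mem_toFinset.mp hv)
  rw [List.toFinset_append, List.toFinset_append] at hcycle
  rw [← Finset.union_sdiff_cancel_right (hdisj hwP), hcycle,
    Finset.union_sdiff_cancel_right (hdisj hwQ)]

theorem IsCactus.toFinset_eq_of_isPath (hA : IsCactus A) {x y : Fin n} {P Q : List (Fin n)}
    (hxy : x ≠ y) (hP : IsPath A x y P) (hQ : IsPath A x y Q)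
    (hPQ : ∀ v ∈ P, v ∈ Q → v = x ∨ v = y) : P.toFinset = Q.toFinset := by
  obtain ⟨r, hr⟩ := (hA.1 y x).exists_isPath
  induction hlen : r.length using Nat.strong_induction_on generalizing x y P Q r with
  | _ N ih =>
  obtain ⟨rt, rfl⟩ := hr.eq_cons
  have hx : x ∈ rt := (List.mem_cons.mp hr.getLast_mem).resolve_left hxy
  obtain ⟨w, t, d, rfl, htPQ, hw⟩ := List.exists_eq_append_cons_of_exists_mem
    (P := fun v => v ∈ P ∨ v ∈ Q) ⟨x, hx, .inl hP.head_mem⟩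
  simp only [not_or] at hw
  have hty : t ≠ y := by
    rintro rfl
    exact (List.nodup_cons.mp hr.2.2.2).1 (by simp)
  rw [← List.cons_append] at hr
  by_cases htx : t = x
  · subst htx
    exact hA.toFinset_eq_of_return hP hQ hr.takeUntil (fun v hv => (hw v hv).1)
      (fun v hv => (hw v hv).2)
  exfalso
  wlog htP : t ∈ P generalizing P Q
  · exact this hQ hP (fun v hvQ hvP => hPQ v hvP hvQ) htPQ.symm (fun v hv => (hw v hv).symm)
      (htPQ.resolve_left htP)
  have htQ : t ∉ Q := fun htQ => (hPQ t htP htQ).elim htx hty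
  obtain ⟨s, u, rfl⟩ := List.append_of_mem htP
  have hys : y ∉ s ++ [t] := by
    simp only [List.mem_append, List.mem_singleton, not_or]
    exact ⟨fun hy => List.disjoint_of_nodup_append hP.2.2.2 hy hP.dropUntil.getLast_mem,
      Ne.symm hty⟩
  have hQ' : IsPath A x t (Q ++ (w ++ [t])) := hQ.append hr.takeUntil (by grind)
  have hPQ' : ∀ v ∈ s ++ [t], v ∈ Q ++ (w ++ [t]) → v = x ∨ v = t := by grind
  have key := ih (t :: d).length (by simp [← hlen]) (Ne.symm htx) hP.takeUntil hQ' hPQ' _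
    hr.dropUntil rfl
  exact hys (List.mem_toFinset.mp (key ▸ List.mem_toFinset.mpr (by simp [hQ.getLast_mem])))

theorem Reach.exists_isPath_not_mem_or {i j k : Fin n} (h : Reach A i k) (hij : i ≠ j) :
    (∃ p, IsPath A i k p ∧ j ∉ p) ∨ ∃ q, IsPath A j k q ∧ i ∉ q := by
  obtain ⟨p, hp⟩ := h.exists_isPath
  by_cases hjp : j ∈ p
  · obtain ⟨s, u, rfl⟩ := List.append_of_mem hjp
    have his : i ∈ s := by simpa [hij] using hp.takeUntil.head_mem
    exact .inr ⟨_, hp.dropUntil, List.disjoint_of_nodup_append hp.2.2.2 his⟩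
  · exact .inl ⟨p, hp, hjp⟩

theorem IsCactus.mem_or_mem_of_isPath (hA : IsCactus A) {i j k : Fin n} {p q : List (Fin n)}
    (hij : A i j = true) (hp : IsPath A i k p) (hq : IsPath A j k q) : j ∈ p ∨ i ∈ q := by
  by_contra! ⟨hjp, hiq⟩
  obtain ⟨w, m, d, rfl, hmp, hw⟩ := List.exists_eq_append_cons_of_exists_mem (P := (· ∈ p))
    ⟨k, hq.getLast_mem, hp.getLast_mem⟩
  obtain ⟨s, u, rfl⟩ := List.append_of_mem hmp
  have hiq' : i ∉ w ++ [m] := fun h => hiq (by simp_all)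
  have hmi : i ≠ m := fun h => hiq' (by simp [h])
  have hsub : s ++ [m] ⊆ s ++ m :: u :=
    ((List.nil_sublist u).cons_cons m).append_left s |>.subset
  have key := hA.toFinset_eq_of_isPath hmi (hq.takeUntil.cons hij hiq') hp.takeUntil ?_
  · have hj : j ∈ i :: (w ++ [m]) := List.mem_cons_of_mem i hq.takeUntil.head_mem
    exact hjp (hsub (List.mem_toFinset.mp (key ▸ List.mem_toFinset.mpr hj)))
  intro v hv hvp
  simp only [List.mem_cons, List.mem_append, List.not_mem_nil, or_false] at hv
  rcases hv with rfl | hvw | rfl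
  exacts [.inl rfl, absurd (hsub hvp) (hw v hvw), .inr rfl]

end

theorem stmt_11_general {n : ℕ} (A : Fin n → Fin n → Bool)
    (hcact : IsCactus A) (i j : Fin n) (hedge : A i j = true) :
    (∀ k : Fin n, k = i ∨ k = j ∨
        (k ≠ i ∧ k ≠ j ∧ ∃ p : List (Fin n), IsPath A i k p ∧ j ∉ p) ∨
        (k ≠ i ∧ k ≠ j ∧ ∃ p : List (Fin n), IsPath A j k p ∧ i ∉ p)) ∧
    (∀ k : Fin n,
        ¬((k ≠ i ∧ k ≠ j ∧ ∃ p : List (Fin n), IsPath A i k p ∧ j ∉ p) ∧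
          (k ≠ i ∧ k ≠ j ∧ ∃ p : List (Fin n), IsPath A j k p ∧ i ∉ p))) := by
  refine ⟨fun k => ?_, ?_⟩
  · by_cases hki : k = i
    · exact .inl hki
    by_cases hkj : k = j
    · exact .inr (.inl hkj)
    rcases (hcact.1 i k).exists_isPath_not_mem_or (hcact.ne_of_adj hedge) with
      ⟨p, hp, hjp⟩ | ⟨q, hq, hiq⟩
    · exact .inr (.inr (.inl ⟨hki, hkj, p, hp, hjp⟩))
    · exact .inr (.inr (.inr ⟨hki, hkj, q, hq, hiq⟩))
  · rintro k ⟨⟨-, -, p, hp, hjp⟩, -, -, q, hq, hiq⟩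
    exact (hcact.mem_or_mem_of_isPath hedge hp hq).elim hjp hiq

/-- if `(i,j)` is an edge of a directed cactus with both endpoints of
degree `> 1`, the vertex set is the disjoint union of `{i,j}`, `V_j(i→)` and
`V_i(j→)`. -/
theorem stmt_11 {n : ℕ} (A : Fin n → Fin n → Bool) (hA : ∀ i, A i i = false)
    (hcact : IsCactus A) (i j : Fin n) (hedge : A i j = true)
    (hdi : 1 < outdeg A i) (hdj : 1 < outdeg A j) :
    (∀ k : Fin n, k = i ∨ k = j ∨
        (k ≠ i ∧ k ≠ j ∧ ∃ p : List (Fin n), IsPath A i k p ∧ j ∉ p) ∨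
        (k ≠ i ∧ k ≠ j ∧ ∃ p : List (Fin n), IsPath A j k p ∧ i ∉ p)) ∧
    (∀ k : Fin n,
        ¬((k ≠ i ∧ k ≠ j ∧ ∃ p : List (Fin n), IsPath A i k p ∧ j ∉ p) ∧
          (k ≠ i ∧ k ≠ j ∧ ∃ p : List (Fin n), IsPath A j k p ∧ i ∉ p))) :=
  stmt_11_general A hcact i j hedge
end

section
/- Let G be a directed cactus graph and (i,j) a directed edge of G. If k is a vertex such that there exists a directed path from i to k not passing through j, then there also exists a directed path from k to i not passing through j. -/
open Matrix Finset

/-! Write `x ⇝ y` for reachability by edges that do not enter `j`. Along a walk `i ⇝ b → v` it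
suffices, inductively, to get back from `v` to `b`, or directly to `i`. Let `C` be the cycle through
`(b, v)`. If `j ∉ C`, go around `C` back to `b`. Otherwise `C` enters `j` from some `w` with
`b ⇝ w`. Starting at the successor `a` of `j` on the cycle `D` through `(i, j)`, walk along `D` to
`i` and on to `w`; with `w → j → a` this closes into a cycle through `(j, a)`, which must be `D`.
Hence `w = i`, so `(i, j) ∈ C` and `C = D`, and `v` reaches `i` along `D`. -/

open Relation

namespace List

variable {α : Type*} [DecidableEq α] {l : List α} {x y : α}

theorem mem_zip_rotate_one_iff (hl : l.Nodup) :
    (x, y) ∈ l.zip (l.rotate 1) ↔ x ∈ l ∧ l.formPerm x = y := by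
  constructor
  · intro h
    obtain ⟨t, ht, hxy⟩ := mem_iff_getElem.1 h
    simp only [getElem_zip, getElem_rotate, Prod.mk.injEq, length_zip, length_rotate, min_self]
      at hxy ht
    obtain ⟨rfl, rfl⟩ := hxy
    exact ⟨getElem_mem _, formPerm_apply_getElem _ hl _ _⟩
  · rintro ⟨hx, rfl⟩
    obtain ⟨t, ht, rfl⟩ := getElem_of_mem hx
    rw [formPerm_apply_getElem _ hl]
    refine mem_iff_getElem.2 ⟨t, by simpa using ht, ?_⟩
    simp [getElem_rotate]

theorem exists_formPerm_pow_eq (hl : l.Nodup) (hx : x ∈ l) (hy : y ∈ l) :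
    ∃ N : ℕ, (l.formPerm ^ N) x = y := by
  obtain ⟨s, hs, rfl⟩ := getElem_of_mem hx
  obtain ⟨t, ht, rfl⟩ := getElem_of_mem hy
  refine ⟨t + l.length - s, ?_⟩
  rw [formPerm_pow_apply_getElem _ hl]
  congr 1
  rw [← Nat.add_sub_assoc (by omega), Nat.add_sub_cancel_left, Nat.add_mod_right,
    Nat.mod_eq_of_lt ht]

theorem formPerm_apply_ne_self (hl : l.Nodup) (h2 : 2 ≤ l.length) (hx : x ∈ l) :
    l.formPerm x ≠ x :=
  (formPerm_apply_mem_ne_self_iff _ hl x hx).2 h2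

theorem forall_rel_formPerm_of_isChain {r : α → α → Prop} (hl : l.Nodup) (hne : l ≠ [])
    (hchain : l.IsChain r) (hlast : r (l.getLast hne) (l.head hne)) :
    ∀ x ∈ l, r x (l.formPerm x) := by
  intro x hx
  obtain ⟨t, ht, rfl⟩ := getElem_of_mem hx
  rcases Nat.lt_or_ge (t + 1) l.length with hlt | hge
  · rw [formPerm_apply_lt_getElem _ hl _ hlt]
    exact isChain_iff_getElem.1 hchain t hlt
  · obtain ⟨z, zs, rfl⟩ := exists_cons_of_ne_nil hne
    have htl : t = zs.length := by simp at ht hge; omega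
    subst htl
    simpa [getLast_eq_getElem] using hlast

end List

section Walks

variable {α : Type*} {r : α → α → Prop} {a b j : α}

def StepAvoiding (r : α → α → Prop) (j : α) (x y : α) : Prop := r x y ∧ y ≠ j

theorem ne_of_reflTransGen_stepAvoiding (h : ReflTransGen (StepAvoiding r j) a b) (ha : a ≠ j) :
    b ≠ j := by
  induction h with
  | refl => exact ha
  | tail _ hbc _ => exact hbc.2

theorem reflTransGen_of_isChain {p : List α} (hp : p.IsChain r) (ha : p.head? = some a)
    (hb : p.getLast? = some b) : ReflTransGen r a b := by
  have hne : p ≠ [] := by rintro rfl; simp at ha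
  rw [← (List.head_eq_iff_head?_eq_some hne).2 ha,
    ← (List.getLast_eq_iff_getLast?_eq_some hne).2 hb]
  exact List.relationReflTransGen_of_exists_isChain p hp hne

theorem exists_nodup_isChain_of_reflTransGen (h : ReflTransGen r a b) :
    ∃ p : List α, p.IsChain r ∧ p.head? = some a ∧ p.getLast? = some b ∧ p.Nodup ∧
      ∀ x ∈ p, ReflTransGen r a x := by
  induction h with
  | refl =>
    exact ⟨[a], List.isChain_singleton a, rfl, rfl, List.nodup_singleton a,
      by simp [ReflTransGen.refl]⟩
  | @tail b c hab hbc ih =>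
    obtain ⟨p, hp, hpa, hpb, hnd, hreach⟩ := ih
    by_cases hcp : c ∈ p
    · obtain ⟨s, t, rfl⟩ := List.append_of_mem hcp
      have hpre : s ++ [c] <+: s ++ c :: t := ⟨t, by simp⟩
      refine ⟨s ++ [c], hp.prefix hpre, ?_, List.getLast?_concat, hnd.sublist hpre.sublist,
        fun x hx => hreach x (hpre.subset hx)⟩
      cases s <;> simp_all
    · refine ⟨p ++ [c], ?_, ?_, List.getLast?_concat, ?_, ?_⟩
      · refine List.isChain_append.2 ⟨hp, List.isChain_singleton c, fun x hx y hy => ?_⟩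
        rw [hpb, Option.mem_some_iff] at hx
        rw [List.head?_singleton, Option.mem_some_iff] at hy
        exact hx ▸ hy ▸ hbc
      · cases p <;> simp_all
      · exact hnd.append (List.nodup_singleton c) (List.disjoint_singleton.2 hcp)
      · simpa [or_imp, forall_and] using ⟨hreach, hab.tail hbc⟩

variable [DecidableEq α] {l : List α} {x y : α}

theorem reflTransGen_stepAvoiding_of_notMem (hl : l.Nodup) (hr : ∀ z ∈ l, r z (l.formPerm z))
    (hj : j ∉ l) (hx : x ∈ l) (hy : y ∈ l) : ReflTransGen (StepAvoiding r j) x y := by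
  obtain ⟨N, rfl⟩ := l.exists_formPerm_pow_eq hl hx hy
  clear hy
  induction N generalizing x with
  | zero => rfl
  | succ N ih =>
    have hσx := List.formPerm_apply_mem_of_mem hx
    rw [pow_succ, Equiv.Perm.mul_apply]
    exact .head ⟨hr x hx, fun h => hj (h ▸ hσx)⟩ (ih hσx)

theorem reflTransGen_stepAvoiding_of_formPerm_eq (hl : l.Nodup) (hr : ∀ z ∈ l, r z (l.formPerm z))
    (hx : x ∈ l) (hxj : x ≠ j) (hy : y ∈ l) (hyj : l.formPerm y = j) :
    ReflTransGen (StepAvoiding r j) x y := by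
  obtain ⟨N, hN⟩ := l.exists_formPerm_pow_eq hl hx (hyj ▸ List.formPerm_apply_mem_of_mem hy)
  induction N generalizing x with
  | zero => exact absurd hN hxj
  | succ N ih =>
    rw [pow_succ, Equiv.Perm.mul_apply] at hN
    by_cases hxy : x = y
    · rw [hxy]
    have hσxj : l.formPerm x ≠ j := fun h => hxy (l.formPerm.injective (h.trans hyj.symm))
    exact .head ⟨hr x hx, hσxj⟩ (ih (List.formPerm_apply_mem_of_mem hx) hσxj hN)

end Walks

section Cactus

variable {n : ℕ} {A : Fin n → Fin n → Bool} {s : Finset (Fin n × Fin n)} {i j x y z : Fin n}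

theorem isCycle_iff : IsCycle A s ↔ ∃ c : List (Fin n), 2 ≤ c.length ∧ c.Nodup ∧
    (∀ x ∈ c, A x (c.formPerm x) = true) ∧ ∀ x y, (x, y) ∈ s ↔ x ∈ c ∧ c.formPerm x = y := by
  constructor
  · rintro ⟨c, hc2, hcnd, hcA, rfl⟩
    refine ⟨c, hc2, hcnd, fun x hx => hcA _ ((List.mem_zip_rotate_one_iff hcnd).2 ⟨hx, rfl⟩),
      fun x y => ?_⟩
    rw [List.mem_toFinset, List.mem_zip_rotate_one_iff hcnd]
  · rintro ⟨c, hc2, hcnd, hcA, hs⟩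
    refine ⟨c, hc2, hcnd, fun ⟨x, y⟩ hxy => ?_, ?_⟩
    · obtain ⟨hx, rfl⟩ := (List.mem_zip_rotate_one_iff hcnd).1 hxy
      exact hcA x hx
    · ext ⟨x, y⟩
      rw [hs, List.mem_toFinset, List.mem_zip_rotate_one_iff hcnd]

namespace IsCycle

variable (hs : IsCycle A s)
include hs

theorem adj_of_mem_s12 (h : (x, y) ∈ s) : A x y = true := by
  obtain ⟨c, -, -, hcA, hcs⟩ := isCycle_iff.1 hs
  obtain ⟨hx, rfl⟩ := (hcs x y).1 h
  exact hcA x hx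

theorem fst_ne_snd (h : (x, y) ∈ s) : x ≠ y := by
  obtain ⟨c, hc2, hcnd, -, hcs⟩ := isCycle_iff.1 hs
  obtain ⟨hx, rfl⟩ := (hcs x y).1 h
  exact (List.formPerm_apply_ne_self hcnd hc2 hx).symm

theorem fst_eq_of_mem (hx : (x, z) ∈ s) (hy : (y, z) ∈ s) : x = y := by
  obtain ⟨c, -, -, -, hcs⟩ := isCycle_iff.1 hs
  exact c.formPerm.injective (((hcs x z).1 hx).2.trans ((hcs y z).1 hy).2.symm)

theorem reflTransGen_stepAvoiding (hij : (i, j) ∈ s) (hxy : (x, y) ∈ s) (hyj : y ≠ j) :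
    ReflTransGen (StepAvoiding (A · · = true) j) y i := by
  obtain ⟨c, -, hcnd, hcA, hcs⟩ := isCycle_iff.1 hs
  obtain ⟨hx, rfl⟩ := (hcs x y).1 hxy
  obtain ⟨hi, hij⟩ := (hcs i j).1 hij
  exact reflTransGen_stepAvoiding_of_formPerm_eq hcnd hcA (List.formPerm_apply_mem_of_mem hx)
    hyj hi hij

end IsCycle

theorem exists_isCycle_cons {a w : Fin n} {q : List (Fin n)}
    (hq : (a :: q).IsChain (A · · = true)) (hnd : (a :: q).Nodup)
    (hw : (a :: q).getLast? = some w) (hj : j ∉ a :: q) (hja : A j a = true)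
    (hwj : A w j = true) : ∃ s, IsCycle A s ∧ (j, a) ∈ s ∧ (w, j) ∈ s := by
  obtain rfl := (List.getLast_eq_iff_getLast?_eq_some (List.cons_ne_nil a q)).2 hw
  set c := j :: a :: q
  have hcnd : c.Nodup := List.nodup_cons.2 ⟨hj, hnd⟩
  have hcA : ∀ x ∈ c, A x (c.formPerm x) = true :=
    List.forall_rel_formPerm_of_isChain hcnd (List.cons_ne_nil _ _)
      (List.isChain_cons_cons.2 ⟨hja, hq⟩) (by simpa [c] using hwj)
  have hmem : ∀ x y, (x, y) ∈ (c.zip (c.rotate 1)).toFinset ↔ x ∈ c ∧ c.formPerm x = y :=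
    fun _ _ => List.mem_toFinset.trans (List.mem_zip_rotate_one_iff hcnd)
  refine ⟨_, isCycle_iff.2 ⟨c, by simp [c], hcnd, hcA, hmem⟩, (hmem _ _).2 ⟨by simp [c], ?_⟩,
    (hmem _ _).2 ⟨by simp [c], by simp [c]⟩⟩
  exact List.formPerm_apply_head _ _ _ hcnd

variable (huniq : ∀ a b, A a b = true → ∃! s, IsCycle A s ∧ (a, b) ∈ s)
include huniq

theorem eq_of_reflTransGen_stepAvoiding {w : Fin n} (hij : A i j = true)
    (hiw : ReflTransGen (StepAvoiding (A · · = true) j) i w) (hwj : A w j = true) : w = i := by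
  obtain ⟨sD, ⟨hD, hijD⟩, -⟩ := huniq i j hij
  obtain ⟨d, -, -, -, hds⟩ := isCycle_iff.1 hD
  have hja : (j, d.formPerm j) ∈ sD :=
    (hds _ _).2 ⟨((hds i j).1 hijD).2 ▸ List.formPerm_apply_mem_of_mem ((hds i j).1 hijD).1, rfl⟩
  have haj : d.formPerm j ≠ j := (hD.fst_ne_snd hja).symm
  obtain ⟨p, hp, hpa, hpw, hpnd, hpreach⟩ := exists_nodup_isChain_of_reflTransGen
    ((hD.reflTransGen_stepAvoiding hijD hja haj).trans hiw)
  obtain ⟨q, rfl⟩ := List.head?_eq_some_iff.1 hpa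
  have hjp : j ∉ d.formPerm j :: q := fun h =>
    ne_of_reflTransGen_stepAvoiding (hpreach j h) haj rfl
  obtain ⟨sC, hC, hjaC, hwjC⟩ :=
    exists_isCycle_cons (hp.imp fun _ _ h => h.1) hpnd hpw hjp (hD.adj_of_mem_s12 hja) hwj
  have hCD : sC = sD := (huniq _ _ (hD.adj_of_mem_s12 hja)).unique ⟨hC, hjaC⟩ ⟨hD, hja⟩
  exact hD.fst_eq_of_mem (hCD ▸ hwjC) hijD

theorem reflTransGen_stepAvoiding_symm (hij : A i j = true)
    (h : ReflTransGen (StepAvoiding (A · · = true) j) i x) :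
    ReflTransGen (StepAvoiding (A · · = true) j) x i := by
  obtain ⟨sD, ⟨hD, hijD⟩, hDuniq⟩ := huniq i j hij
  induction h with
  | refl => rfl
  | @tail b v hib hbv ih =>
    obtain ⟨sC, ⟨hC, hbvC⟩, -⟩ := huniq b v hbv.1
    obtain ⟨c, -, hcnd, hcA, hcs⟩ := isCycle_iff.1 hC
    obtain ⟨hb, hσb⟩ := (hcs b v).1 hbvC
    by_cases hjc : j ∈ c
    · obtain ⟨w, hwj⟩ : ∃ w, c.formPerm w = j := ⟨_, c.formPerm.apply_symm_apply j⟩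
      have hw : w ∈ c := List.mem_of_formPerm_apply_mem (hwj ▸ hjc)
      have hbw := reflTransGen_stepAvoiding_of_formPerm_eq (r := (A · · = true)) hcnd hcA hb
        (ne_of_reflTransGen_stepAvoiding hib (hD.fst_ne_snd hijD)) hw hwj
      have hwi : w = i :=
        eq_of_reflTransGen_stepAvoiding huniq hij (hib.trans hbw) (hwj ▸ hcA w hw)
      have hCD : sC = sD := hDuniq sC ⟨hC, (hcs i j).2 ⟨hwi ▸ hw, hwi ▸ hwj⟩⟩
      exact hD.reflTransGen_stepAvoiding hijD (hCD ▸ hbvC) hbv.2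
    · exact (reflTransGen_stepAvoiding_of_notMem hcnd hcA hjc
        (hσb ▸ List.formPerm_apply_mem_of_mem hb) hb).trans ih

end Cactus

theorem stmt_12_general {n : ℕ} (A : Fin n → Fin n → Bool)
    (hcact : IsCactus A) (i j k : Fin n) (hedge : A i j = true)
    (hk : ∃ p : List (Fin n), IsPath A i k p ∧ j ∉ p) :
    ∃ q : List (Fin n), IsPath A k i q ∧ j ∉ q := by
  obtain ⟨p, ⟨hp, hpi, hpk, -⟩, hjp⟩ := hk
  have hik : ReflTransGen (StepAvoiding (A · · = true) j) i k :=
    reflTransGen_of_isChain (hp.imp_of_mem_imp fun _ b _ hb hab => ⟨hab, fun h => hjp (h ▸ hb)⟩)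
      hpi hpk
  have hkj : k ≠ j := fun h => hjp (h ▸ List.mem_of_getLast? hpk)
  obtain ⟨q, hq, hqk, hqi, hqnd, hqreach⟩ :=
    exists_nodup_isChain_of_reflTransGen (reflTransGen_stepAvoiding_symm hcact.2 hedge hik)
  exact ⟨q, ⟨hq.imp fun _ _ h => h.1, hqk, hqi, hqnd⟩,
    fun h => ne_of_reflTransGen_stepAvoiding (hqreach j h) hkj rfl⟩

/-- in a directed cactus with edge `(i,j)`, if `k` is reachable from `i`
by a directed path avoiding `j`, then `i` is reachable from `k` by a directed path
avoiding `j`. -/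
theorem stmt_12 {n : ℕ} (A : Fin n → Fin n → Bool) (hA : ∀ i, A i i = false)
    (hcact : IsCactus A) (i j k : Fin n) (hedge : A i j = true)
    (hk : ∃ p : List (Fin n), IsPath A i k p ∧ j ∉ p) :
    ∃ q : List (Fin n), IsPath A k i q ∧ j ∉ q :=
  stmt_12_general A hcact i j k hedge hk
end
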